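/- arXiv:math/0402443 — 8 statements merged into one kernel-verified Lean document; each statement's English description precedes it below -/
import Mathlib

section
/- Let G be an abelian group and let H be a point-separating subgroup of Hom(G,𝕋). Then the topology 𝒯_H induced on G by H (the weak/initial topology determined by the homomorphisms in H) is a Hausdorff totally bounded group topology on G, and the weight of (G,𝒯_H) equals the cardinality of H. -/
open Pointwise

local notation "𝕋" => AddCircle (1 : ℝ)

/-- The weight of a topology: the least cardinality of a (topological) base. -/
noncomputable def topWeight {X : Type*} (t : TopologicalSpace X) : Cardinal :=
  ⨅ B : {B : Set (Set X) // @TopologicalSpace.IsTopologicalBasis X t B}, Cardinal.mk B.1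

/-- A group topology is totally bounded if every nonempty open set `U` admits a
finite set `F` with `F + U = G`. -/
def TotallyBoundedGroupTop {G : Type*} [AddCommGroup G] (t : TopologicalSpace G) : Prop :=
  ∀ U : Set G, @IsOpen G t U → U.Nonempty → ∃ F : Set G, F.Finite ∧ F + U = Set.univ

/-- The weak (initial) topology on `G` induced by a subgroup `H` of `Hom(G, 𝕋)`. -/
noncomputable def weakTopOf {G : Type*} [AddCommGroup G] (H : AddSubgroup (G →+ 𝕋)) :
    TopologicalSpace G :=
  ⨅ h : H, TopologicalSpace.induced (⇑(h : G →+ 𝕋)) inferInstance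

/-!
Evaluation `x ↦ (h x)_{h ∈ H}` identifies `(G, 𝒯_H)` with a subgroup of the compact group `𝕋^H`
carrying the subspace topology. Point separation makes it injective, hence Hausdorff, and
compactness of its closure makes it totally bounded. Finite intersections of preimages of a
countable base of `𝕋` form a base of size `|H|` when `H` is infinite.

For the lower bound, fix a base `B` and a countable dense `C ⊆ 𝕋`. A character `χ ∈ H` is
determined by finitely many members of `B × C`: take `b ∈ B` around `0` on which `χ` is small,
cover `G` by finitely many translates `x + b`, and around each `x` a basic set on which `χ` is
close to some `c ∈ C`. Two characters with the same record differ by less than `1/4` everywhere,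
and the only subgroup of `𝕋` inside the ball of radius `1/4` is trivial. So `|H| ≤ |B|`. When `H`
is finite, `G` is finite and discrete, and `|G| = |H|` by counting characters of finite groups.
-/

open TopologicalSpace Cardinal

lemma UnitAddCircle.eq_zero_of_forall_norm_nsmul_lt {t : 𝕋} (h : ∀ n : ℕ, ‖n • t‖ < 1 / 4) :
    t = 0 := by
  induction t using QuotientAddGroup.induction_on with
  | H y =>
  set x := y - round y
  have hx_coe : ((x : ℝ) : 𝕋) = y := by
    rw [AddCircle.coe_sub, sub_eq_self, AddCircle.coe_eq_zero_iff]
    exact ⟨round y, by simp⟩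
  have h_norm (n : ℕ) (hn : n * |x| ≤ 1 / 2) : ‖n • (y : 𝕋)‖ = n * |x| := by
    have habs : (n : ℝ) * |x| = |n * x| := by rw [abs_mul, Nat.abs_cast]
    rw [← hx_coe, ← AddCircle.coe_nsmul, nsmul_eq_mul, habs,
      AddCircle.norm_coe_eq_abs_iff (p := 1) one_ne_zero]
    simpa [← habs] using hn
  have hx_lt : |x| < 1 / 4 := by
    have := h 1
    rwa [h_norm 1 (by simpa using abs_sub_round y), Nat.cast_one, one_mul] at this
  by_contra hne
  have hx_pos : 0 < |x| := abs_pos.mpr fun hx0 => hne (by rw [← hx_coe, hx0, AddCircle.coe_zero])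
  -- `n • x` lands in `[1/4, 1/2]`, where the norm of `𝕋` is still the absolute value
  set n := ⌈1 / (4 * |x|)⌉₊
  have h_ge : 1 / 4 ≤ n * |x| := by
    have := Nat.le_ceil (1 / (4 * |x|))
    rw [div_le_iff₀ (by positivity)] at this
    linarith
  have h_le : n * |x| ≤ 1 / 2 := by
    have := Nat.ceil_lt_add_one (show 0 ≤ 1 / (4 * |x|) by positivity)
    have := mul_lt_mul_of_pos_right this hx_pos
    rw [add_mul, one_mul, div_mul_eq_mul_div, one_mul, div_mul_cancel_right₀ hx_pos.ne'] at this
    linarith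
  have := h n
  rw [h_norm n h_le] at this
  linarith

lemma AddMonoidHom.eq_of_forall_norm_sub_lt {G : Type*} [AddMonoid G] {f g : G →+ 𝕋}
    (h : ∀ x, ‖f x - g x‖ < 1 / 4) : f = g := by
  ext x
  rw [← sub_eq_zero]
  refine UnitAddCircle.eq_zero_of_forall_norm_nsmul_lt fun n => ?_
  simpa [smul_sub] using h (n • x)

noncomputable def AddMonoidHom.toComplexAddChar {A : Type*} [AddMonoid A] (f : A →+ 𝕋) :
    AddChar A ℂ :=
  Circle.coeHom.compAddChar (AddCircle.toCircle_addChar.compAddMonoidHom f)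

lemma AddMonoidHom.toComplexAddChar_injective {A : Type*} [AddMonoid A] :
    Function.Injective (AddMonoidHom.toComplexAddChar (A := A)) := by
  intro f g hfg
  ext a
  have := DFunLike.congr_fun hfg a
  exact AddCircle.injective_toCircle one_ne_zero (Circle.coe_injective this)

instance finite_addMonoidHom_unitAddCircle {A : Type*} [AddCommGroup A] [Finite A] :
    Finite (A →+ 𝕋) :=
  Finite.of_injective _ AddMonoidHom.toComplexAddChar_injective

lemma card_addMonoidHom_unitAddCircle_le (A : Type*) [AddCommGroup A] [Finite A] :
    Nat.card (A →+ 𝕋) ≤ Nat.card A := by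
  have := Fintype.ofFinite A
  calc Nat.card (A →+ 𝕋) ≤ Nat.card (AddChar A ℂ) :=
        Nat.card_le_card_of_injective _ AddMonoidHom.toComplexAddChar_injective
    _ ≤ Nat.card A := by
        simpa only [Nat.card_eq_fintype_card] using AddChar.card_addChar_le A ℂ

section Weight

variable {X : Type*} [TopologicalSpace X]

lemma topWeight_le {B : Set (Set X)} (hB : IsTopologicalBasis B) : topWeight ‹_› ≤ #B :=
  ciInf_le' (fun B : {B : Set (Set X) // IsTopologicalBasis B} => #B.1) ⟨B, hB⟩

lemma le_topWeight {c : Cardinal} (h : ∀ B : Set (Set X), IsTopologicalBasis B → c ≤ #B) :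
    c ≤ topWeight ‹_› :=
  have : Nonempty {B : Set (Set X) // IsTopologicalBasis B} := ⟨⟨_, isTopologicalBasis_opens⟩⟩
  le_ciInf fun B => h B.1 B.2

lemma topWeight_eq_mk_of_discrete [DiscreteTopology X] : topWeight ‹_› = #X := by
  refine le_antisymm ((topWeight_le (isTopologicalBasis_singletons X)).trans ?_) ?_
  · exact mk_le_of_surjective (f := fun x : X => (⟨{x}, x, rfl⟩ : {s : Set X | ∃ x, s = {x}}))
      fun ⟨_, x, hx⟩ => ⟨x, Subtype.ext hx.symm⟩
  · refine le_topWeight fun B hB => ?_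
    have h_mem (x : X) : ({x} : Set X) ∈ B := by
      obtain ⟨v, hvB, hxv, hv⟩ := hB.exists_subset_of_mem_open (Set.mem_singleton x)
        (isOpen_discrete {x})
      rwa [Set.Subset.antisymm hv (Set.singleton_subset_iff.mpr hxv)] at hvB
    exact mk_le_of_injective (f := fun x => (⟨{x}, h_mem x⟩ : B))
      fun x y hxy => Set.singleton_injective (congrArg Subtype.val hxy)

lemma TopologicalSpace.IsTopologicalBasis.infinite [T0Space X] [Infinite X] {B : Set (Set X)}
    (hB : IsTopologicalBasis B) : Infinite B := by
  have : Infinite (Set B) := .of_injective (fun x => {b : B | x ∈ (b : Set X)}) fun x y hxy =>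
    (hB.inseparable_iff.mpr fun s hs => by simpa using Set.ext_iff.mp hxy ⟨s, hs⟩).eq
  exact not_finite_iff_infinite.mp fun _ => not_finite (Set B)

end Weight

section TotallyBounded

variable {G : Type*} [AddCommGroup G]

lemma totallyBoundedGroupTop_induced {K : Type*} [AddCommGroup K] [TopologicalSpace K]
    [IsTopologicalAddGroup K] [CompactSpace K] (f : G →+ K) :
    TotallyBoundedGroupTop (induced f ‹_›) := by
  rintro U hU ⟨u, hu⟩
  obtain ⟨O, hO, rfl⟩ := isOpen_induced_iff.mp hU
  set W : Set K := (· + f u) ⁻¹' O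
  have hW : IsOpen W := hO.preimage (continuous_add_const _)
  have hW0 : (0 : K) ∈ W := by simpa [W] using hu
  have h_cover : closure (Set.range f) ⊆ ⋃ g : G, (· - f g) ⁻¹' W := by
    intro z hz
    obtain ⟨_, hzg, g, rfl⟩ := mem_closure_iff.mp hz ((z - ·) ⁻¹' W)
      (hW.preimage (continuous_sub_left z)) (by simpa using hW0)
    exact Set.mem_iUnion.mpr ⟨g, hzg⟩
  obtain ⟨s, hs⟩ := isClosed_closure.isCompact.elim_finite_subcover _
    (fun g => hW.preimage (continuous_sub_right (f g))) h_cover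
  refine ⟨(· - u) '' s, s.finite_toSet.image _, Set.eq_univ_of_forall fun x => ?_⟩
  obtain ⟨g, hg, hxg⟩ := Set.mem_iUnion₂.mp (hs (subset_closure (Set.mem_range_self x)))
  refine ⟨g - u, ⟨g, hg, rfl⟩, x - g + u, ?_, by beta_reduce; abel⟩
  simpa [W, sub_eq_add_neg, add_assoc] using hxg

end TotallyBounded

section Approximation

variable {G : Type*} [AddCommGroup G] {B : Set (Set G)} {C : Set 𝕋}

-- `1/16`: four of these errors add up to the `1/4` of `AddMonoidHom.eq_of_forall_norm_sub_lt`.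
def Approximates (χ : G →+ 𝕋) (b : Set G) (s : Finset (B × C)) : Prop :=
  (∀ v ∈ b, ‖χ v‖ < 1 / 16) ∧ ∀ q ∈ s, ∀ y ∈ (q.1 : Set G), ‖χ y - q.2‖ < 1 / 16

lemma Approximates.eq {χ ψ : G →+ 𝕋} {b : Set G} {s : Finset (B × C)}
    (hcover : ∀ g, ∃ q ∈ s, g ∈ (q.1 : Set G) + b) (hχ : Approximates χ b s)
    (hψ : Approximates ψ b s) : χ = ψ := by
  refine AddMonoidHom.eq_of_forall_norm_sub_lt fun g => ?_
  obtain ⟨q, hq, y, hy, v, hv, rfl⟩ := hcover g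
  calc ‖χ (y + v) - ψ (y + v)‖ = ‖(χ y - q.2 + χ v) - (ψ y - q.2 + ψ v)‖ := by
        rw [map_add, map_add]; abel_nf
    _ ≤ ‖χ y - q.2‖ + ‖χ v‖ + (‖ψ y - q.2‖ + ‖ψ v‖) :=
        norm_sub_le_of_le (norm_add_le _ _) (norm_add_le _ _)
    _ < 1 / 16 + 1 / 16 + (1 / 16 + 1 / 16) := by
        gcongr
        exacts [hχ.2 q hq y hy, hχ.1 v hv, hψ.2 q hq y hy, hψ.1 v hv]
    _ = 1 / 4 := by norm_num

variable [TopologicalSpace G]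

lemma TotallyBoundedGroupTop.exists_approximates (htb : TotallyBoundedGroupTop ‹_›) {χ : G →+ 𝕋} (hχ : Continuous χ)
    (hB : IsTopologicalBasis B) (hC : Dense C) :
    ∃ b ∈ B, ∃ s : Finset (B × C), Approximates χ b s ∧ ∀ g, ∃ q ∈ s, g ∈ (q.1 : Set G) + b := by
  classical
  obtain ⟨b, hbB, hb0, hb⟩ := hB.exists_subset_of_mem_open (a := 0)
    (by simp : (0 : G) ∈ χ ⁻¹' Metric.ball 0 (1 / 16)) (Metric.isOpen_ball.preimage hχ)
  obtain ⟨F, hF, hFb⟩ := htb b (hB.isOpen hbB) ⟨0, hb0⟩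
  have h_near (x : F) : ∃ q : B × C, x.1 ∈ (q.1 : Set G) ∧
      ∀ y ∈ (q.1 : Set G), ‖χ y - q.2‖ < 1 / 16 := by
    obtain ⟨c, hcC, hc⟩ := hC.exists_dist_lt (χ x) (by norm_num : (0 : ℝ) < 1 / 16)
    obtain ⟨U, hUB, hxU, hU⟩ := hB.exists_subset_of_mem_open (a := x.1)
      (by simpa using hc : x.1 ∈ χ ⁻¹' Metric.ball c (1 / 16)) (Metric.isOpen_ball.preimage hχ)
    exact ⟨(⟨U, hUB⟩, ⟨c, hcC⟩), hxU, fun y hy => by simpa [dist_eq_norm] using hU hy⟩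
  choose q hxq hq using h_near
  have := hF.fintype
  refine ⟨b, hbB, Finset.univ.image q, ⟨fun v hv => by simpa using hb hv, ?_⟩, fun g => ?_⟩
  · simp only [Finset.mem_image, Finset.mem_univ, true_and, forall_exists_index]
    rintro _ x rfl
    exact hq x
  · obtain ⟨x, hx, v, hv, rfl⟩ : g ∈ F + b := hFb ▸ Set.mem_univ g
    exact ⟨q ⟨x, hx⟩, Finset.mem_image_of_mem _ (Finset.mem_univ _), Set.add_mem_add (hxq _) hv⟩

lemma TotallyBoundedGroupTop.mk_le_mk_of_isTopologicalBasis (htb : TotallyBoundedGroupTop ‹_›) (S : Set (G →+ 𝕋))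
    (hS : ∀ χ ∈ S, Continuous χ) (hB : IsTopologicalBasis B) [Infinite B] : #S ≤ #B := by
  obtain ⟨C, hCc, hC⟩ := exists_countable_dense 𝕋
  choose b hbB s hs hcover using fun χ : S => htb.exists_approximates (hS χ χ.2) hB hC
  have hinj : Function.Injective fun χ : S => ((⟨b χ, hbB χ⟩ : B), s χ) := by
    intro χ ψ h
    simp only [Prod.mk.injEq, Subtype.mk.injEq] at h
    have hψ := hs ψ
    rw [← h.1, ← h.2] at hψ
    exact Subtype.ext ((hs χ).eq (hcover χ) hψ)
  have : Nonempty C := hC.nonempty.to_subtype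
  have hB₀ : ℵ₀ ≤ #B := aleph0_le_mk B
  calc #S ≤ #(B × Finset (B × C)) := mk_le_of_injective hinj
    _ = #B * (#B * lift #C) := by simp only [mk_prod, mk_finset_of_infinite, lift_id, lift_uzero]
    _ ≤ #B := mul_le_of_le hB₀ le_rfl (mul_le_of_le hB₀ le_rfl
        ((lift_le_aleph0.mpr (mk_le_aleph0_iff.mpr hCc.to_subtype)).trans hB₀))

end Approximation

section WeakTopology

variable {G : Type*} [AddCommGroup G] (H : AddSubgroup (G →+ 𝕋))

lemma weakTopOf_eq_induced :
    weakTopOf H = induced (AddMonoidHom.pi fun h : H => (h : G →+ 𝕋)) inferInstance := by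
  simp only [weakTopOf, Pi.topologicalSpace, induced_iInf, induced_compose]
  rfl

lemma continuous_weakTopOf {h : G →+ 𝕋} (hh : h ∈ H) : @Continuous G 𝕋 (weakTopOf H) _ h :=
  continuous_iInf_dom (i := ⟨h, hh⟩) continuous_induced_dom

lemma isTopologicalAddGroup_weakTopOf : @IsTopologicalAddGroup G (weakTopOf H) _ :=
  topologicalAddGroup_iInf fun h => topologicalAddGroup_induced (h : G →+ 𝕋)

lemma totallyBoundedGroupTop_weakTopOf : TotallyBoundedGroupTop (weakTopOf H) :=
  weakTopOf_eq_induced H ▸ totallyBoundedGroupTop_induced _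

lemma topWeight_weakTopOf_le [Infinite H] : topWeight (weakTopOf H) ≤ #H := by
  classical
  obtain ⟨b, hbc, -, hb⟩ := exists_countable_basis 𝕋
  have : Nonempty b := (Set.Nonempty.of_sUnion_eq_univ hb.sUnion_eq).to_subtype
  have hB := IsTopologicalBasis.iInf_induced (fun _ : H => hb) (fun h => ⇑(h : G →+ 𝕋))
  refine (@topWeight_le G (weakTopOf H) _ hB).trans ?_
  let V : Finset (H × b) → Set G := fun s => ⋂ q ∈ s, (q.1 : G →+ 𝕋) ⁻¹' q.2
  calc _ ≤ #(Set.range V) := by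
        refine mk_le_mk_of_subset ?_
        rintro _ ⟨U, F, hU, rfl⟩
        refine ⟨F.attach.image fun i => (i.1, ⟨U i.1, hU i.1 i.2⟩), ?_⟩
        ext x
        simp only [V, Finset.set_biInter_finset_image, Set.mem_iInter, Finset.mem_attach,
          forall_const, Subtype.forall]
    _ ≤ #(Finset (H × b)) := mk_range_le
    _ = #H := by
        simp only [mk_finset_of_infinite, mk_prod, lift_uzero]
        exact mul_eq_left (aleph0_le_mk H) ((lift_le_aleph0.mpr
          (mk_le_aleph0_iff.mpr hbc.to_subtype)).trans (aleph0_le_mk H)) (by simp)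

variable {H}

lemma injective_pi_of_separates (hsep : ∀ x : G, x ≠ 0 → ∃ h ∈ H, h x ≠ 0) :
    Function.Injective (AddMonoidHom.pi fun h : H => (h : G →+ 𝕋)) :=
  (injective_iff_map_eq_zero _).mpr fun x hx => by
    by_contra hx0
    obtain ⟨h, hh, hhx⟩ := hsep x hx0
    exact hhx (congrFun hx ⟨h, hh⟩)

lemma t2Space_weakTopOf (hsep : ∀ x : G, x ≠ 0 → ∃ h ∈ H, h x ≠ 0) :
    @T2Space G (weakTopOf H) :=
  let := weakTopOf H
  .of_injective_continuous (injective_pi_of_separates hsep)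
    (continuous_pi fun h => continuous_weakTopOf H h.2)

lemma injective_dual_of_separates (hsep : ∀ x : G, x ≠ 0 → ∃ h ∈ H, h x ≠ 0) :
    Function.Injective fun x : G => (AddMonoidHom.eval x).comp H.subtype :=
  fun _ _ hxy => injective_pi_of_separates hsep (funext fun h => DFunLike.congr_fun hxy h)

lemma topWeight_weakTopOf_of_finite (hsep : ∀ x : G, x ≠ 0 → ∃ h ∈ H, h x ≠ 0) [Finite H] :
    topWeight (weakTopOf H) = #H := by
  let := weakTopOf H
  have := t2Space_weakTopOf hsep
  have : Finite G := .of_injective _ (injective_dual_of_separates hsep)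
  have h_le : Nat.card G ≤ Nat.card H :=
    (Nat.card_le_card_of_injective _ (injective_dual_of_separates hsep)).trans
      (card_addMonoidHom_unitAddCircle_le H)
  have h_ge : Nat.card H ≤ Nat.card G :=
    (Nat.card_le_card_of_injective _ Subtype.val_injective).trans
      (card_addMonoidHom_unitAddCircle_le G)
  rw [topWeight_eq_mk_of_discrete, ← Nat.cast_card, ← Nat.cast_card, h_le.antisymm h_ge]

end WeakTopology

theorem stmt0 (G : Type*) [AddCommGroup G] (H : AddSubgroup (G →+ 𝕋))
    (hsep : ∀ x : G, x ≠ 0 → ∃ h ∈ H, h x ≠ 0) :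
    @T2Space G (weakTopOf H) ∧
    @IsTopologicalAddGroup G (weakTopOf H) inferInstance ∧
    TotallyBoundedGroupTop (weakTopOf H) ∧
    topWeight (weakTopOf H) = Cardinal.mk H := by
  let := weakTopOf H
  have := t2Space_weakTopOf hsep
  refine ⟨this, isTopologicalAddGroup_weakTopOf H, totallyBoundedGroupTop_weakTopOf H, ?_⟩
  rcases finite_or_infinite H with hH | hH
  · exact topWeight_weakTopOf_of_finite hsep
  refine (topWeight_weakTopOf_le H).antisymm (le_topWeight fun B hB => ?_)
  have : Infinite G := not_finite_iff_infinite.mp fun _ => not_finite H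
  have := hB.infinite
  exact (totallyBoundedGroupTop_weakTopOf H).mk_le_mk_of_isTopologicalBasis H
    (fun _ => continuous_weakTopOf H) hB
end

section
/- Let K be an abelian group, let H be a subgroup of K whose index α = |K/H| is an uncountable cardinal, and let ℋ = {S : S is a subgroup of K with H ⊆ S, S ≠ K, and |S| = |K|}. Then |ℋ| = 2^α. -/
/-!
Subgroups of `K` containing `H` correspond to subgroups of `Q = K ⧸ H`, which gives the upper
bound `2 ^ |Q|`. For the lower bound, an uncountable abelian group `Q` has an independent family
of nonzero subgroups of cardinality `|Q|`. Indeed, a maximal independent family of cyclic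
subgroups spans some `E` with `Q ⧸ E` torsion, so `|Q| ≤ ℵ₀ · |E| · sup_n |Q[n]|`, and
`|Q[n]| ≤ ℵ₀ · ∑_p |Q[p]|` since `Q[ab] → Q[a]`, `x ↦ b • x` has kernel inside `Q[b]`. Hence
either the family itself is large, or the union over all primes `p` of maximal independent
families of cyclic subgroups of the socles `Q[p]`, each spanning `Q[p]`, is. Splitting the
family as `A ⊔ B ⊔ {x}` with `|A| = |Q|`, the subgroups generated by `A ∪ B'` for `B' ⊆ B` are
pairwise distinct, proper and of size `|Q|`; their preimages in `K` have size `|H| · |Q| = |K|`.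
-/

universe u

open Cardinal Submodule

section Lattice

variable {α : Type*} [CompleteLattice α]

theorem iSupIndep.le_biSup_iff {ι : Type*} {t : ι → α} (ht : iSupIndep t) {j : ι}
    (hj : t j ≠ ⊥) {I : Set ι} : t j ≤ ⨆ i ∈ I, t i ↔ j ∈ I :=
  ⟨fun hle => by_contra fun hjI =>
    hj (disjoint_self.mp ((ht.disjoint_biSup hjI).mono_right hle)), fun hjI => le_biSup t hjI⟩

variable [IsModularLattice α]

theorem sSupIndep.insert_of_disjoint {s : Set α} {a : α} (hs : sSupIndep s)
    (ha : Disjoint a (sSup s)) : sSupIndep (insert a s) := by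
  intro x hx
  by_cases hxa : x = a
  · subst hxa
    exact ha.mono_right (sSup_le_sSup fun y hy => hy.1.resolve_left hy.2)
  have hxs : x ∈ s := hx.resolve_left hxa
  have hsub : insert a s \ {x} = insert a (s \ {x}) := Set.insert_sdiff_of_notMem _ (Ne.symm hxa)
  rw [hsub, sSup_insert, sup_comm]
  refine (hs hxs).disjoint_sup_right_of_disjoint_sup_left (ha.symm.mono_left ?_)
  exact sup_le (le_sSup hxs) (sSup_le_sSup Set.sdiff_subset)

theorem iSupIndep.sigma_of_le {ι : Type*} {κ : ι → Type*} {t : ι → α} {f : ∀ i, κ i → α}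
    (ht : iSupIndep t) (hf : ∀ i, iSupIndep (f i)) (hle : ∀ i j, f i j ≤ t i) :
    iSupIndep fun x : Σ i, κ i => f x.1 x.2 := by
  rintro ⟨i, j⟩
  have hsup : (⨆ (x : Σ i, κ i) (_ : x ≠ ⟨i, j⟩), f x.1 x.2) ≤
      (⨆ (j' : κ i) (_ : j' ≠ j), f i j') ⊔ ⨆ (i' : ι) (_ : i' ≠ i), t i' := by
    refine iSup₂_le fun ⟨i', j'⟩ hne => ?_
    rcases eq_or_ne i' i with rfl | hi
    · exact le_sup_of_le_left (le_iSup₂_of_le j' (fun h => hne (h ▸ rfl)) le_rfl)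
    · exact le_sup_of_le_right (le_iSup₂_of_le i' hi (hle i' j'))
  refine Disjoint.mono_right hsup ((hf i j).disjoint_sup_right_of_disjoint_sup_left ?_)
  exact (ht i).mono_left (sup_le (hle i j) (iSup₂_le fun j' _ => hle i j'))

theorem exists_sSupIndep_forall_not_disjoint [IsCompactlyGenerated α] (P : α → Prop)
    (hP : ∀ a, P a → a ≠ ⊥) :
    ∃ s : Set α, (∀ a ∈ s, P a) ∧ sSupIndep s ∧ ∀ a, P a → ¬Disjoint a (sSup s) := by
  obtain ⟨s, ⟨hsP, hs⟩, hmax⟩ := zorn_subset {s : Set α | (∀ a ∈ s, P a) ∧ sSupIndep s}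
    fun c hc hchain => ⟨⋃₀ c, ⟨fun a ⟨u, hu, ha⟩ => (hc hu).1 a ha,
      iSupIndep_sUnion_of_directed hchain.directedOn fun u hu => (hc hu).2⟩,
      fun _ => Set.subset_sUnion_of_mem⟩
  refine ⟨s, hsP, hs, fun a ha hdisj => hP a ha ?_⟩
  have has : a ∈ s := hmax ⟨fun b hb => hb.elim (· ▸ ha) (hsP b), hs.insert_of_disjoint hdisj⟩
    (Set.subset_insert a s) (Set.mem_insert a s)
  exact disjoint_self.mp (hdisj.mono_right (le_sSup has))

end Lattice

section Torsion

variable {R M : Type*} [CommRing R] [AddCommGroup M] [Module R M]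

theorem mk_le_mk_mul_mk_torsionBy_of_smul_mem {P Q : Submodule R M} {a : R}
    (h : ∀ x ∈ P, a • x ∈ Q) : #P ≤ #Q * #(torsionBy R M a) := by
  let φ : P → Q := fun x => ⟨a • x, h x x.2⟩
  refine mk_le_mk_mul_of_mk_preimage_le φ fun y => ?_
  rcases (φ ⁻¹' {y}).eq_empty_or_nonempty with he | ⟨x₀, hx₀⟩
  · simp [he]
  refine mk_le_of_injective (f := fun x : φ ⁻¹' {y} => (⟨x.1 - x₀, ?_⟩ : torsionBy R M a)) ?_
  · have hx : a • (x.1 : M) = a • x₀ := congrArg Subtype.val (x.2.trans hx₀.symm)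
    rw [mem_torsionBy_iff, smul_sub, hx, sub_self]
  · intro x x' hxx'
    exact Subtype.ext (Subtype.ext (sub_left_injective (congrArg Subtype.val hxx')))

theorem mk_torsionBy_mul_le (a b : R) :
    #(torsionBy R M (a * b)) ≤ #(torsionBy R M a) * #(torsionBy R M b) :=
  mk_le_mk_mul_mk_torsionBy_of_smul_mem fun x hx => by
    rw [mem_torsionBy_iff, smul_smul]
    exact (mem_torsionBy_iff _ _).mp hx

end Torsion

section IntModule

variable {G : Type u} [AddCommGroup G]

theorem mk_span_int_le (s : Set G) : #(span ℤ s) ≤ max ℵ₀ #s := by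
  have hrange : LinearMap.range (Finsupp.linearCombination ℤ ((↑) : s → G)) = span ℤ s := by
    rw [Finsupp.range_linearCombination, Subtype.range_coe]
  calc #(span ℤ s) ≤ #(s →₀ ℤ) :=
        hrange ▸ mk_le_of_surjective (LinearMap.surjective_rangeRestrict _)
    _ ≤ max ℵ₀ #s := by
        rcases isEmpty_or_nonempty s with hs | hs
        · exact mk_le_aleph0.trans (le_max_left _ _)
        · simp [mk_finsupp_lift_of_infinite', max_comm]

theorem mk_sSup_le_of_isPrincipal {s : Set (Submodule ℤ G)} (hs : ∀ C ∈ s, C.IsPrincipal) :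
    #(sSup s : Submodule ℤ G) ≤ max ℵ₀ #s := by
  choose g hg using fun C : s => (hs C C.2).principal
  have hsSup : sSup s = span ℤ (Set.range g) := by
    rw [Submodule.span_range_eq_iSup, sSup_eq_iSup']
    exact iSup_congr hg
  rw [hsSup]
  exact (mk_span_int_le _).trans (max_le_max le_rfl mk_range_le)

theorem mk_torsionBy_le_sum_prime {n : ℕ} (hn : n ≠ 0) :
    #(torsionBy ℤ G n) ≤ max ℵ₀ (sum fun p : Nat.Primes => #(torsionBy ℤ G p)) := by
  induction n using Nat.recOnMul with
  | zero => exact absurd rfl hn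
  | one =>
    simp only [Nat.cast_one, torsionBy_one]
    exact (mk_le_aleph0 (α := (⊥ : Submodule ℤ G))).trans (le_max_left _ _)
  | prime p hp =>
    exact (le_sum (fun q : Nat.Primes => #(torsionBy ℤ G q)) ⟨p, hp⟩).trans (le_max_right _ _)
  | mul a b iha ihb =>
    rw [Nat.cast_mul]
    calc _ ≤ #(torsionBy ℤ G a) * #(torsionBy ℤ G b) := mk_torsionBy_mul_le _ _
      _ ≤ _ := mul_le_mul' (iha (left_ne_zero_of_mul hn)) (ihb (right_ne_zero_of_mul hn))
      _ = _ := mul_eq_self (le_max_left _ _)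

theorem mk_le_aleph0_mul_of_forall_exists_smul_mem {E : Submodule ℤ G} {κ : Cardinal.{u}}
    (hE : ∀ g : G, ∃ n : ℕ, n ≠ 0 ∧ (n : ℤ) • g ∈ E)
    (hκ : ∀ n : ℕ, n ≠ 0 → #(torsionBy ℤ G n) ≤ κ) : #G ≤ ℵ₀ * (#E * κ) := by
  let P : ℕ → Submodule ℤ G := fun n => E.comap (DistribSMul.toLinearMap ℤ G (n.succ : ℤ))
  have hcover : (Set.univ : Set G) ⊆ ⋃ n, (P n : Set G) := by
    intro g _
    obtain ⟨n, hn, hg⟩ := hE g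
    obtain ⟨m, rfl⟩ := Nat.exists_eq_succ_of_ne_zero hn
    exact Set.mem_iUnion.mpr ⟨m, hg⟩
  have hP : ∀ n, #(P n) ≤ #E * κ := fun n =>
    (mk_le_mk_mul_mk_torsionBy_of_smul_mem fun _ hx => hx).trans
      (mul_le_mul_right (hκ n.succ n.succ_ne_zero) _)
  calc #G = #(Set.univ : Set G) := mk_univ.symm
    _ ≤ #(⋃ n, (P n : Set G)) := mk_le_mk_of_subset hcover
    _ ≤ ℵ₀ * (#E * κ) := by
      simpa using (mk_iUnion_le_lift fun n => (P n : Set G)).trans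
        (mul_le_mul_right (ciSup_le' fun n => by simpa using hP n) _)

theorem exists_smul_ne_zero_mem_of_not_disjoint {g : G} {E : Submodule ℤ G}
    (h : ¬Disjoint (ℤ ∙ g) E) : ∃ k : ℤ, k • g ≠ 0 ∧ k • g ∈ E := by
  by_contra! hne
  refine h (disjoint_def.mpr fun y hy hyE => ?_)
  obtain ⟨k, rfl⟩ := mem_span_singleton.mp hy
  by_contra hk0
  exact hne k hk0 hyE

theorem torsionBy_prime_le_of_forall_not_disjoint {p : ℕ} (hp : p.Prime) {E : Submodule ℤ G}
    (hE : ∀ g ∈ torsionBy ℤ G p, g ≠ 0 → ¬Disjoint (ℤ ∙ g) E) : torsionBy ℤ G p ≤ E := by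
  intro g hg
  rcases eq_or_ne g 0 with rfl | hg0
  · exact E.zero_mem
  obtain ⟨k, hk0, hkE⟩ := exists_smul_ne_zero_mem_of_not_disjoint (hE g hg hg0)
  have hpg : (p : ℤ) • g = 0 := (mem_torsionBy_iff _ _).mp hg
  -- `k` is a unit modulo `p`, so `g` is a multiple of `k • g`.
  have hcop : IsCoprime (p : ℤ) k := (Nat.prime_iff_prime_int.mp hp).coprime_iff_not_dvd.mpr
    fun ⟨m, hm⟩ => hk0 (by rw [hm, mul_comm, mul_smul, hpg, smul_zero])
  obtain ⟨u, v, huv⟩ := hcop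
  have hg_eq : g = v • k • g := calc
    g = (u * p + v * k) • g := by rw [huv, one_smul]
    _ = v • k • g := by rw [add_smul, mul_smul, mul_smul, hpg, smul_zero, zero_add]
  rw [hg_eq]
  exact E.smul_mem v hkE

theorem exists_sSupIndep_le_torsionBy_prime {p : ℕ} (hp : p.Prime) :
    ∃ s : Set (Submodule ℤ G), (∀ C ∈ s, C ≠ ⊥ ∧ C ≤ torsionBy ℤ G p) ∧ sSupIndep s ∧
      #(torsionBy ℤ G p) ≤ max ℵ₀ #s := by
  obtain ⟨s, hsP, hs, hmax⟩ := exists_sSupIndep_forall_not_disjoint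
    (fun C : Submodule ℤ G => C.IsPrincipal ∧ C ≠ ⊥ ∧ C ≤ torsionBy ℤ G p) fun _ h => h.2.1
  refine ⟨s, fun C hC => (hsP C hC).2, hs, ?_⟩
  have hle : torsionBy ℤ G p ≤ sSup s :=
    torsionBy_prime_le_of_forall_not_disjoint hp fun g hg hg0 => hmax _
      ⟨⟨g, rfl⟩, span_singleton_eq_bot.not.mpr hg0, (span_singleton_le_iff_mem _ _).mpr hg⟩
  exact (mk_le_mk_of_subset hle).trans (mk_sSup_le_of_isPrincipal fun C hC => (hsP C hC).1)

theorem iSupIndep_torsionBy_prime :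
    iSupIndep fun p : Nat.Primes => torsionBy ℤ G (p : ℕ) :=
  iSupIndep_iff_supIndep.mpr fun _ => supIndep_torsionBy fun p _ q _ hpq =>
    Nat.isCoprime_iff_coprime.mpr ((Nat.coprime_primes p.2 q.2).mpr (Subtype.coe_ne_coe.mpr hpq))

theorem exists_iSupIndep_of_le_sum_torsionBy_prime (hG : ℵ₀ < #G)
    (hσ : #G ≤ sum fun p : Nat.Primes => #(torsionBy ℤ G p)) :
    ∃ (ι : Type u) (t : ι → Submodule ℤ G), #G ≤ #ι ∧ (∀ i, t i ≠ ⊥) ∧ iSupIndep t := by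
  choose s hs hind hcard using fun p : Nat.Primes =>
    exists_sSupIndep_le_torsionBy_prime (G := G) p.2
  refine ⟨Σ p, s p, fun x => x.2.1, ?_, fun x => (hs x.1 x.2.1 x.2.2).1,
    iSupIndep_torsionBy_prime.sigma_of_le (fun p => (sSupIndep_iff _).mp (hind p))
      fun p C => (hs p C.1 C.2).2⟩
  have hσ' : #G ≤ ℵ₀ + #(Σ p, s p) := calc
    #G ≤ sum fun p : Nat.Primes => ℵ₀ + #(s p) :=
      hσ.trans (sum_le_sum _ _ fun p =>
        (hcard p).trans (max_le (self_le_add_right _ _) (self_le_add_left _ _)))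
    _ ≤ ℵ₀ + #(Σ p, s p) := by
      rw [sum_add_distrib', mk_sigma, sum_const, lift_aleph0]
      have : lift.{u} #Nat.Primes * ℵ₀ ≤ ℵ₀ :=
        (mul_le_mul_left (lift_le_aleph0.mpr mk_le_aleph0) _).trans aleph0_mul_aleph0.le
      exact add_le_add_left this _
  by_contra! hlt
  exact (hσ'.trans_lt (add_lt_of_lt hG.le hG hlt)).false

theorem exists_iSupIndep_ne_bot_of_aleph0_lt (hG : ℵ₀ < #G) :
    ∃ (ι : Type u) (t : ι → Submodule ℤ G), #G ≤ #ι ∧ (∀ i, t i ≠ ⊥) ∧ iSupIndep t := by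
  obtain ⟨s, hsP, hs, hmax⟩ := exists_sSupIndep_forall_not_disjoint
    (fun C : Submodule ℤ G => C.IsPrincipal ∧ C ≠ ⊥) fun _ h => h.2
  by_cases hbig : #G ≤ #s
  · exact ⟨s, Subtype.val, hbig, fun C => (hsP C C.2).2, (sSupIndep_iff s).mp hs⟩
  refine exists_iSupIndep_of_le_sum_torsionBy_prime hG ?_
  have htors : ∀ g : G, ∃ n : ℕ, n ≠ 0 ∧ (n : ℤ) • g ∈ sSup s := by
    intro g
    rcases eq_or_ne g 0 with rfl | hg0
    · exact ⟨1, one_ne_zero, by simp⟩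
    obtain ⟨k, hk0, hkE⟩ := exists_smul_ne_zero_mem_of_not_disjoint
      (hmax _ ⟨⟨g, rfl⟩, span_singleton_eq_bot.not.mpr hg0⟩)
    refine ⟨k.natAbs, Int.natAbs_ne_zero.mpr fun h => hk0 (by rw [h, zero_smul]), ?_⟩
    rcases abs_choice k with h | h <;> rw [Int.natCast_natAbs, h]
    exacts [hkE, (neg_smul k g).symm ▸ neg_mem hkE]
  have hE : #(sSup s : Submodule ℤ G) < #G :=
    (mk_sSup_le_of_isPrincipal fun C hC => (hsP C hC).1).trans_lt (max_lt hG (not_le.mp hbig))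
  have hbound := mk_le_aleph0_mul_of_forall_exists_smul_mem htors fun _ hn =>
    mk_torsionBy_le_sum_prime (G := G) hn
  by_contra! hlt
  exact (hbound.trans_lt (mul_lt_of_lt hG.le hG (mul_lt_of_lt hG.le hE (max_lt hG hlt)))).false

end IntModule

theorem Submodule.mk_le_mk_iSup_of_iSupIndep {R : Type*} {M ι : Type u} [Ring R]
    [AddCommGroup M] [Module R M] {t : ι → Submodule R M} (ht : iSupIndep t) (hne : ∀ i, t i ≠ ⊥) :
    #ι ≤ #(⨆ i, t i : Submodule R M) := by
  choose x hxt hx0 using fun i => exists_mem_ne_zero_of_ne_bot (hne i)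
  refine mk_le_of_injective (f := fun i => ⟨x i, mem_iSup_of_mem i (hxt i)⟩) fun i j hij => ?_
  by_contra hne'
  have hxij : x i = x j := congrArg Subtype.val hij
  exact hx0 i (disjoint_def.mp (ht.pairwiseDisjoint hne') _ (hxt i) (hxij ▸ hxt j))

section Counting

variable {G : Type u} [AddCommGroup G]

theorem two_pow_le_mk_addSubgroup_ne_top (hG : ℵ₀ < #G) :
    2 ^ #G ≤ #{T : AddSubgroup G // T ≠ ⊤ ∧ #T = #G} := by
  obtain ⟨ι, t₀, hcard, hne₀, ht₀⟩ := exists_iSupIndep_ne_bot_of_aleph0_lt hG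
  have hι : ℵ₀ ≤ #ι := hG.le.trans hcard
  have : Infinite ι := infinite_iff.mpr hι
  -- Re-index by `Option (ι ⊕ ι)`: the `inl` part makes every subgroup large, the `inr` part
  -- is chosen freely, and `none` is never used, keeping the subgroup proper.
  obtain ⟨e⟩ : Nonempty (Option (ι ⊕ ι) ≃ ι) := by
    rw [← Cardinal.eq, mk_option, mk_sum, lift_id, add_eq_self hι, add_one_eq hι]
  let t := t₀ ∘ e
  have ht : iSupIndep t := ht₀.comp e.injective
  have hne : ∀ j, t j ≠ ⊥ := fun j => hne₀ (e j)
  let J : Set ι → Set (Option (ι ⊕ ι)) := fun I =>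
    Set.range (some ∘ Sum.inl) ∪ (some ∘ Sum.inr) '' I
  let F : Set ι → Submodule ℤ G := fun I => ⨆ j ∈ J I, t j
  have hF_inj : Function.Injective F := by
    intro I₁ I₂ hI
    ext i
    have key : ∀ I, i ∈ I ↔ t (some (Sum.inr i)) ≤ F I := fun I => by
      rw [ht.le_biSup_iff (hne _)]
      simp [J]
    rw [key, key, hI]
  have hF_ne_top : ∀ I, F I ≠ ⊤ := fun I hI => by
    have h : t none ≤ F I := by rw [hI]; exact le_top
    simpa [J] using (ht.le_biSup_iff (hne none)).mp h
  have hF_card : ∀ I, #(F I) = #G := fun I =>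
    le_antisymm (mk_le_of_injective Subtype.val_injective) <| calc #G ≤ #ι := hcard
      _ ≤ #(⨆ i, t (some (Sum.inl i)) : Submodule ℤ G) :=
        mk_le_mk_iSup_of_iSupIndep (ht.comp (Option.some_injective _ |>.comp Sum.inl_injective))
          fun i => hne _
      _ ≤ #(F I) := mk_le_mk_of_subset (iSup_le fun i => le_biSup t (by simp [J]))
  calc 2 ^ #G ≤ 2 ^ #ι := power_le_power_left two_ne_zero hcard
    _ = #(Set ι) := mk_set.symm
    _ ≤ #{T : AddSubgroup G // T ≠ ⊤ ∧ #T = #G} :=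
      mk_le_of_injective
        (f := fun I => ⟨(F I).toAddSubgroup, by simpa using hF_ne_top I, hF_card I⟩)
        fun _ _ h => hF_inj (toAddSubgroup_injective (congrArg Subtype.val h))

end Counting

section Quotient

variable {K : Type*} [AddCommGroup K] (H : AddSubgroup K)

theorem mk_preimage_quotient_mk (t : Set (K ⧸ H)) :
    #((↑) ⁻¹' t : Set K) = #H * #t := by
  rw [mk_congr (QuotientAddGroup.preimageMkEquivAddSubgroupProdSet H t), mk_prod, lift_id,
    lift_id]

theorem mk_eq_mk_mul_mk_quotient : #K = #H * #(K ⧸ H) := by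
  rw [← mk_univ, ← Set.preimage_univ (f := ((↑) : K → K ⧸ H)), mk_preimage_quotient_mk, mk_univ]

theorem mk_addSubgroup_le_two_pow_mk_quotient :
    #{S : AddSubgroup K // H ≤ S ∧ S ≠ ⊤ ∧ #S = #K} ≤ 2 ^ #(K ⧸ H) := calc
  _ ≤ #{S : AddSubgroup K // H ≤ S} := mk_subtype_mono fun _ h => h.1
  _ = #(AddSubgroup (K ⧸ H)) := mk_congr (QuotientAddGroup.comapMk'OrderIso H).toEquiv.symm
  _ ≤ #(Set (K ⧸ H)) := mk_le_of_injective SetLike.coe_injective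
  _ = 2 ^ #(K ⧸ H) := mk_set

theorem mk_addSubgroup_quotient_le :
    #{T : AddSubgroup (K ⧸ H) // T ≠ ⊤ ∧ #T = #(K ⧸ H)} ≤
      #{S : AddSubgroup K // H ≤ S ∧ S ≠ ⊤ ∧ #S = #K} := by
  let π := QuotientAddGroup.mk' H
  have hπ : Function.Surjective π := QuotientAddGroup.mk'_surjective H
  refine mk_le_of_injective (f := fun T => ⟨T.1.comap π, QuotientAddGroup.le_comap_mk' H T.1,
    fun h => T.2.1 (AddSubgroup.comap_injective hπ (h.trans (AddSubgroup.comap_top π).symm)), ?_⟩)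
    fun T₁ T₂ h => Subtype.ext (AddSubgroup.comap_injective hπ (congrArg Subtype.val h))
  calc #(T.1.comap π) = #H * #T.1 := mk_preimage_quotient_mk H T.1
    _ = #K := by rw [T.2.2, mk_eq_mk_mul_mk_quotient H]

end Quotient

theorem stmt2 (K : Type*) [AddCommGroup K] (H : AddSubgroup K)
    (hα : Cardinal.aleph0 < Cardinal.mk (K ⧸ H)) :
    Cardinal.mk {S : AddSubgroup K // H ≤ S ∧ S ≠ ⊤ ∧ Cardinal.mk S = Cardinal.mk K} =
      2 ^ Cardinal.mk (K ⧸ H) :=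
  le_antisymm (mk_addSubgroup_le_two_pow_mk_quotient H)
    ((two_pow_le_mk_addSubgroup_ne_top hα).trans (mk_addSubgroup_quotient_le H))
end

section
/- Let K and M be compact Hausdorff topological groups with normalized Haar measures λ and μ respectively, and let φ : K → M be a continuous surjective group homomorphism. If D is a dense subgroup of M that is not μ-measurable, then H := φ⁻¹(D) is a dense subgroup of K that is not λ-measurable. -/
/-!
A continuous surjective homomorphism of compact groups is open, so preimages of dense sets are
dense. It is also a closed map, so every open `U ⊇ φ⁻¹' T` contains `φ⁻¹' (φ '' Uᶜ)ᶜ`, the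
preimage of an open set containing `T`; by outer regularity the outer measure `μ T` equals
`λ (φ⁻¹' T)`. Hence if `H = φ⁻¹' D` were null-measurable, `μ D + μ Dᶜ = λ H + λ Hᶜ = 1`, and
for outer measures of a finite measure this additivity forces `D` to be null-measurable.
-/

open MeasureTheory Set

theorem MeasureTheory.nullMeasurableSet_of_measure_add_measure_compl {α : Type*}
    [MeasurableSpace α] {μ : Measure α} [IsFiniteMeasure μ] {s : Set α}
    (h : μ s + μ sᶜ = μ univ) : NullMeasurableSet s μ := by
  set t := toMeasurable μ s
  have ht : MeasurableSet t := measurableSet_toMeasurable μ s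
  have hst : s ⊆ t := subset_toMeasurable μ s
  have hcompl : μ sᶜ = μ tᶜ := by
    rw [measure_compl ht (measure_ne_top μ t), measure_toMeasurable]
    exact ENNReal.eq_sub_of_add_eq (measure_ne_top μ s) (by rwa [add_comm])
  -- `t` cuts `sᶜ` into `t \ s` and `tᶜ`, and the latter already carries all of `μ sᶜ`.
  have hnull : μ (t \ s) = 0 := by
    have hsplit : μ (sᶜ ∩ t) + μ (sᶜ \ t) = μ sᶜ := measure_inter_add_sdiff _ ht
    rw [sdiff_eq, inter_eq_right.2 (compl_subset_compl.2 hst), inter_comm, ← sdiff_eq,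
      hcompl] at hsplit
    exact (ENNReal.add_left_inj (measure_ne_top μ _)).1 (hsplit.trans (zero_add _).symm)
  exact ht.nullMeasurableSet.congr (ae_eq_set.2 ⟨hnull, by simp [sdiff_eq_empty.2 hst]⟩)

theorem MeasureTheory.Measure.map_apply_of_isClosedMap {α β : Type*} [TopologicalSpace α]
    [MeasurableSpace α] [TopologicalSpace β] [MeasurableSpace β] [OpensMeasurableSpace β]
    (μ : Measure α) [μ.OuterRegular] {f : α → β} (hf : Measurable f) (hfc : IsClosedMap f)
    (t : Set β) : μ.map f t = μ (f ⁻¹' t) := by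
  refine le_antisymm ?_ (Measure.le_map_apply hf.aemeasurable t)
  rw [Set.measure_eq_iInf_isOpen (f ⁻¹' t) μ]
  refine le_iInf₂ fun U htU => le_iInf fun hU => ?_
  have hV : IsOpen (f '' Uᶜ)ᶜ := (hfc _ hU.isClosed_compl).isOpen_compl
  have htV : t ⊆ (f '' Uᶜ)ᶜ := by
    rintro y hy ⟨x, hxU, rfl⟩
    exact hxU (htU hy)
  calc μ.map f t ≤ μ.map f (f '' Uᶜ)ᶜ := measure_mono htV
    _ = μ (f ⁻¹' (f '' Uᶜ)ᶜ) := Measure.map_apply hf hV.measurableSet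
    _ ≤ μ U := measure_mono fun x hx => not_not.1 fun hxU => hx ⟨x, hxU, rfl⟩

theorem MeasureTheory.NullMeasurableSet.of_preimage_of_isClosedMap {α β : Type*}
    [TopologicalSpace α] [MeasurableSpace α] [TopologicalSpace β] [MeasurableSpace β]
    [OpensMeasurableSpace β] {μ : Measure α} [μ.OuterRegular] [IsFiniteMeasure μ] {f : α → β}
    (hf : Measurable f) (hfc : IsClosedMap f) {t : Set β}
    (ht : NullMeasurableSet (f ⁻¹' t) μ) : NullMeasurableSet t (μ.map f) := by
  apply nullMeasurableSet_of_measure_add_measure_compl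
  simp only [Measure.map_apply_of_isClosedMap μ hf hfc, preimage_compl, preimage_univ]
  exact measure_add_measure_compl₀ ht

theorem stmt4_general (K M : Type*) [Group K] [TopologicalSpace K] [IsTopologicalGroup K]
    [CompactSpace K] [MeasurableSpace K] [BorelSpace K]
    [Group M] [TopologicalSpace M] [IsTopologicalGroup M]
    [CompactSpace M] [T2Space M] [MeasurableSpace M] [BorelSpace M]
    (lam : Measure K) [lam.IsHaarMeasure] (hlam : lam Set.univ = 1)
    (μ : Measure M) [μ.IsHaarMeasure] (hμ : μ Set.univ = 1)
    (φ : K →* M) (hc : Continuous φ) (hs : Function.Surjective φ)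
    (D : Subgroup M) (hDdense : Dense (D : Set M))
    (hDnm : ¬ NullMeasurableSet (D : Set M) μ) :
    Dense ((D.comap φ : Subgroup K) : Set K) ∧
    ¬ NullMeasurableSet ((D.comap φ : Subgroup K) : Set K) lam := by
  refine ⟨hDdense.preimage (φ.isOpenMap_of_sigmaCompact hs hc), fun hH => hDnm ?_⟩
  have hmap : lam.map φ = μ :=
    (MonoidHom.measurePreserving hc hs (by rw [hlam, hμ])).map_eq
  have : IsProbabilityMeasure lam := ⟨hlam⟩
  rw [← hmap]
  exact hH.of_preimage_of_isClosedMap hc.measurable hc.isClosedMap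

theorem stmt4 (K M : Type*) [Group K] [TopologicalSpace K] [IsTopologicalGroup K]
    [CompactSpace K] [T2Space K] [MeasurableSpace K] [BorelSpace K]
    [Group M] [TopologicalSpace M] [IsTopologicalGroup M]
    [CompactSpace M] [T2Space M] [MeasurableSpace M] [BorelSpace M]
    (lam : Measure K) [lam.IsHaarMeasure] (hlam : lam Set.univ = 1)
    (μ : Measure M) [μ.IsHaarMeasure] (hμ : μ Set.univ = 1)
    (φ : K →* M) (hc : Continuous φ) (hs : Function.Surjective φ)
    (D : Subgroup M) (hDdense : Dense (D : Set M))
    (hDnm : ¬ NullMeasurableSet (D : Set M) μ) :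
    Dense ((D.comap φ : Subgroup K) : Set K) ∧
    ¬ NullMeasurableSet ((D.comap φ : Subgroup K) : Set K) lam :=
  stmt4_general K M lam hlam μ hμ φ hc hs D hDdense hDnm
end

section
/- Let M be an abelian group with |M| = κ > ℵ₀ whose torsion subgroup t(M) satisfies |t(M)| < κ, let S be a subgroup of M with |S| < κ, and let E ⊆ M with |E| = κ. Then there exists x ∈ E \ t(M) such that the cyclic subgroup ⟨x⟩ generated by x satisfies ⟨x⟩ ∩ S = {0}. -/
/-!
If no nonzero multiple of `x` lies in `S`, then `x` is torsion-free and `⟨x⟩ ∩ S = 0`. For `n ≠ 0`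
the kernel of `x ↦ n • x` lies in `t(M)`, so the preimage of `S` under it has at most
`|S| · |t(M)| < κ` elements; the set of bad `x` is a countable union of such preimages, hence
smaller than `κ = |E|`.
-/

open Cardinal

universe u

theorem AddMonoidHom.mk_preimage_singleton_le_ker {G H : Type*} [AddGroup G] [AddGroup H]
    (f : G →+ H) (y : H) : #(f ⁻¹' {y}) ≤ #f.ker := by
  rcases (f ⁻¹' {y}).eq_empty_or_nonempty with h | ⟨x₀, hx₀⟩
  · simp [h]
  have mem_ker (x : f ⁻¹' {y}) : -x₀ + x ∈ f.ker := by
    have hx : f x = y := x.2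
    rw [AddMonoidHom.mem_ker, map_add, map_neg, hx, hx₀, neg_add_cancel]
  exact mk_le_of_injective (f := fun x => (⟨-x₀ + x, mem_ker x⟩ : f.ker)) fun x x' h =>
    Subtype.ext (add_left_cancel (congrArg Subtype.val h))

theorem AddMonoidHom.mk_preimage_le_mul_ker {G H : Type u} [AddGroup G] [AddGroup H]
    (f : G →+ H) (s : Set H) : #(f ⁻¹' s) ≤ #s * #f.ker := by
  calc #(f ⁻¹' s) = #(⋃ y ∈ s, f ⁻¹' {y}) := by
        rw [← Set.preimage_iUnion₂, Set.biUnion_of_singleton]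
    _ ≤ #s * ⨆ y : s, #(f ⁻¹' {y.1}) := mk_biUnion_le _ _
    _ ≤ #s * #f.ker := by
      gcongr
      exact ciSup_le' fun y => f.mk_preimage_singleton_le_ker y

theorem AddCommGroup.ker_zsmul_le_torsion (M : Type*) [AddCommGroup M] {n : ℤ} (hn : n ≠ 0) :
    (zsmulAddGroupHom n : M →+ M).ker ≤ AddCommGroup.torsion M := fun x hx =>
  (AddCommGroup.mem_torsion x).2 (isOfFinAddOrder_iff_zsmul_eq_zero.2 ⟨n, hn, hx⟩)

theorem AddCommGroup.mk_setOf_exists_zsmul_mem_le (M : Type u) [AddCommGroup M] (S : Set M) :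
    #{x : M | ∃ n : ℤ, n ≠ 0 ∧ n • x ∈ S} ≤ ℵ₀ * (#S * #(AddCommGroup.torsion M)) := by
  have hunion : {x : M | ∃ n : ℤ, n ≠ 0 ∧ n • x ∈ S} =
      ⋃ n : {n : ℤ // n ≠ 0}, zsmulAddGroupHom (α := M) n ⁻¹' S := by
    ext x
    simp
  have hpiece (n : {n : ℤ // n ≠ 0}) :
      #(zsmulAddGroupHom (α := M) n ⁻¹' S) ≤ #S * #(AddCommGroup.torsion M) :=
    (AddMonoidHom.mk_preimage_le_mul_ker _ S).trans
      (by gcongr; exact mk_le_mk_of_subset (AddCommGroup.ker_zsmul_le_torsion M n.2))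
  have hle := mk_iUnion_le_lift fun n : {n : ℤ // n ≠ 0} => zsmulAddGroupHom (α := M) n ⁻¹' S
  simp only [lift_uzero] at hle
  rw [hunion]
  refine hle.trans (mul_le_mul' ?_ (ciSup_le' hpiece))
  exact lift_le_aleph0.2 mk_le_aleph0

theorem notMem_torsion_and_zmultiples_inf_eq_bot {M : Type*} [AddCommGroup M]
    {S : AddSubgroup M} {x : M} (hx : ∀ n : ℤ, n ≠ 0 → n • x ∉ S) :
    x ∉ AddCommGroup.torsion M ∧ AddSubgroup.zmultiples x ⊓ S = ⊥ := by
  refine ⟨fun hxt => ?_, ?_⟩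
  · obtain ⟨n, hn, hnx⟩ :=
      isOfFinAddOrder_iff_zsmul_eq_zero.1 ((AddCommGroup.mem_torsion x).1 hxt)
    exact hx n hn (hnx ▸ S.zero_mem)
  · rw [eq_bot_iff]
    rintro _ ⟨⟨n, rfl⟩, hnS⟩
    by_cases hn : n = 0
    · simp [hn]
    · exact absurd hnS (hx n hn)

theorem stmt5 (M : Type*) [AddCommGroup M]
    (hM : Cardinal.aleph0 < Cardinal.mk M)
    (ht : Cardinal.mk (AddCommGroup.torsion M) < Cardinal.mk M)
    (S : AddSubgroup M) (hS : Cardinal.mk S < Cardinal.mk M)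
    (E : Set M) (hE : Cardinal.mk E = Cardinal.mk M) :
    ∃ x ∈ E, x ∉ AddCommGroup.torsion M ∧
      AddSubgroup.zmultiples x ⊓ S = ⊥ := by
  have hbad : #{x : M | ∃ n : ℤ, n ≠ 0 ∧ n • x ∈ S} < #E := hE ▸
    (AddCommGroup.mk_setOf_exists_zsmul_mem_le M S).trans_lt
      (mul_lt_of_lt hM.le hM (mul_lt_of_lt hM.le hS ht))
  obtain ⟨x, hxE, hx⟩ := Set.not_subset.1 fun h => (mk_le_mk_of_subset h).not_gt hbad
  exact ⟨x, hxE, notMem_torsion_and_zmultiples_inf_eq_bot fun n hn hnS => hx ⟨n, hn, hnS⟩⟩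
end

section
/- Let M be an infinite compact metrizable abelian topological group such that either (i) the torsion subgroup t(M) satisfies |t(M)| < 𝔠, or (ii) there is a prime p with p·x = 0 for all x ∈ M. Then M admits a dense subgroup D that is not Haar-measurable and satisfies |M/D| = 𝔠. -/
/-!
Fix a homomorphism `φ : M →+ V` into a vector space over a countable field whose kernel has fewer
than `𝔠` elements: `M → ℚ ⊗ M` in the first case (its kernel is `t(M)`), the identity of the
`𝔽_p`-vector space `M` in the second. Then the `φ`-preimage of the span of fewer than `𝔠` points
still has fewer than `𝔠` points, while every compact set of positive Haar measure has `𝔠` points,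
and there are only `𝔠` such compact sets. A transfinite recursion of length `𝔠` therefore
produces points `x_C ∈ C`, one in each compact set `C` of positive measure, and points `e_m`,
`m ∈ M`, whose images under `φ` are linearly independent. The subgroup `D` generated by the
`x_C` meets every compact set of positive measure, so it is dense and its complement has inner
measure zero; the `e_m` lie in pairwise distinct cosets of `D`, so `|M/D| = 𝔠`, and since a
translate of `D` is disjoint from `D`, `D` cannot be measurable.
-/

open MeasureTheory Cardinal Set Submodule Topology

universe u v

section LinearIndependence

variable {K V : Type*} [DivisionRing K] [AddCommGroup V] [Module K V]

theorem linearIndependent_of_notMem_span_image_Iio {ι : Type*} [LinearOrder ι] [WellFoundedLT ι]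
    {v : ι → V} (hv : ∀ i, v i ∉ span K (v '' Iio i)) : LinearIndependent K v := by
  have hmono : Monotone (Iic : ι → Set ι) := fun _ _ h => Iic_subset_Iic.mpr h
  have hIic : ∀ i, LinearIndepOn K v (Iic i) := by
    intro i
    induction i using WellFoundedLT.induction with
    | _ i ih =>
      have hIio : Iio i = ⋃ j : Iio i, Iic (j : ι) :=
        ext fun x => ⟨fun hx => mem_iUnion.mpr ⟨⟨x, hx⟩, le_rfl⟩,
          fun hx => (mem_iUnion.mp hx).elim fun j hj => lt_of_le_of_lt hj j.2⟩
      rw [← Iio_insert]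
      refine LinearIndepOn.insert ?_ (hv i)
      rw [hIio]
      exact linearIndepOn_iUnion_of_directed (hmono.comp (Subtype.mono_coe _)).directed_le
        fun j => ih j j.2
  rw [← linearIndepOn_univ_iff, ← iUnion_Iic]
  exact linearIndepOn_iUnion_of_directed hmono.directed_le hIic

end LinearIndependence

theorem mk_span_lt_continuum {R M : Type*} [Semiring R] [Countable R] [AddCommMonoid M]
    [Module R M] {s : Set M} (hs : #s < 𝔠) : #(span R s) < 𝔠 := by
  classical
  have hfinsupp : #(s →₀ R) < 𝔠 := by
    calc #(s →₀ R) ≤ #(Finset (s × R)) := mk_le_of_injective (Finsupp.graph_injective s R)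
      _ ≤ #(List (s × R)) := mk_le_of_surjective List.toFinset_surjective
      _ ≤ max ℵ₀ #(s × R) := mk_list_le_max _
      _ < 𝔠 := max_lt aleph0_lt_continuum <| by
          rw [mk_prod]
          exact mul_lt_of_lt aleph0_le_continuum (lift_lt_continuum.mpr hs)
            (lift_lt_continuum.mpr (mk_le_aleph0.trans_lt aleph0_lt_continuum))
  have hsurj : Function.Surjective fun f : s →₀ R =>
      (⟨_, (Finsupp.mem_span_iff_linearCombination R s _).mpr ⟨f, rfl⟩⟩ : span R s) := by
    rintro ⟨x, hx⟩
    obtain ⟨f, rfl⟩ := (Finsupp.mem_span_iff_linearCombination R s x).mp hx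
    exact ⟨f, rfl⟩
  exact lift_lt_continuum.mp <| (lift_mk_le_lift_mk_of_surjective hsurj).trans_lt
    (lift_lt_continuum.mpr hfinsupp)

theorem AddMonoidHom.lift_mk_preimage_le {G : Type u} {H : Type v} [AddGroup G] [AddGroup H]
    (φ : G →+ H) (T : Set H) : lift.{v} #(φ ⁻¹' T) ≤ lift.{u} #T * lift.{v} #φ.ker := by
  refine lift_mk_le_lift_mk_mul_of_lift_mk_preimage_le (fun x : φ ⁻¹' T => (⟨φ x, x.2⟩ : T))
    fun t => lift_le.mpr ?_
  rcases isEmpty_or_nonempty ((fun x : φ ⁻¹' T => (⟨φ x, x.2⟩ : T)) ⁻¹' {t}) with h | ⟨x₀, hx₀⟩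
  · simp
  refine mk_le_of_injective (f := fun x => ⟨x.1.1 - x₀.1, ?_⟩) fun x x' h => ?_
  · have hx := x.2
    simp only [mem_preimage, mem_singleton_iff, Subtype.ext_iff] at hx hx₀
    simp [AddMonoidHom.mem_ker, hx, hx₀]
  · simpa [Subtype.ext_iff] using h

section Selection

variable {K M V : Type*} [DivisionRing K] [AddCommGroup M] [AddCommGroup V] [Module K V]

theorem LinearIndependent.injOn_mk_closure_image {κ : Type*} (φ : M →+ V) {y : κ → M}
    (hy : LinearIndependent K (φ ∘ y)) (s : Set κ) :
    InjOn (fun k => (y k : M ⧸ AddSubgroup.closure (y '' s))) sᶜ := by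
  intro i hi j hj hij
  by_contra hne
  have hle : AddSubgroup.closure (y '' s) ≤
      (span K ((φ ∘ y) '' s)).toAddSubgroup.comap φ :=
    (AddSubgroup.closure_le _).mpr fun _ ⟨k, hk, hyk⟩ =>
      hyk ▸ subset_span (mem_image_of_mem (φ ∘ y) hk)
  have hdiff := hle (QuotientAddGroup.eq.mp hij)
  have hyj : (φ ∘ y) j ∈ span K ((φ ∘ y) '' insert i s) := by
    have : (φ ∘ y) j = φ (y i) + φ (-y i + y j) := by simp
    rw [this, image_insert_eq]
    exact add_mem (subset_span (mem_insert _ _)) (span_mono (subset_insert _ _) hdiff)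
  exact hy.notMem_span_image (fun h => (h.elim (fun h => hne h.symm) hj)) hyj

variable [Countable K]

theorem mk_preimage_span_image_lt_continuum (φ : M →+ V) (hker : #φ.ker < 𝔠) {P : Set M}
    (hP : #P < 𝔠) : #(φ ⁻¹' span K (φ '' P)) < 𝔠 := by
  have hspan : #(span K (φ '' P)) < 𝔠 :=
    mk_span_lt_continuum <| lift_lt_continuum.mp <|
      mk_image_le_lift.trans_lt (lift_lt_continuum.mpr hP)
  exact lift_lt_continuum.mp <| (φ.lift_mk_preimage_le _).trans_lt <|
    mul_lt_of_lt aleph0_le_continuum (lift_lt_continuum.mpr hspan) (lift_lt_continuum.mpr hker)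

theorem exists_mem_linearIndependent_comp_of_wellFoundedLT {ι : Type*} [LinearOrder ι]
    [WellFoundedLT ι] (hι : ∀ i : ι, #(Iio i) < 𝔠) (φ : M →+ V) (hker : #φ.ker < 𝔠)
    (S : ι → Set M) (hS : ∀ i, 𝔠 ≤ #(S i)) :
    ∃ y : ι → M, (∀ i, y i ∈ S i) ∧ LinearIndependent K (φ ∘ y) := by
  have hsmall : ∀ i (y : Iio i → M), #(range y) < 𝔠 := fun i _ =>
    lift_lt_continuum.mp (mk_range_le_lift.trans_lt (lift_lt_continuum.mpr (hι i)))
  have hpick : ∀ i (P : Set M), #P < 𝔠 → ∃ x ∈ S i, φ x ∉ span K (φ '' P) := by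
    intro i P hP
    by_contra! h
    exact (hS i).not_gt ((mk_le_mk_of_subset h).trans_lt
      (mk_preimage_span_image_lt_continuum φ hker hP))
  choose pick hpickS hpickspan using hpick
  let y : ι → M := wellFounded_lt.fix fun i rec =>
    pick i (range fun j : Iio i => rec j j.2) (hsmall i _)
  have hy : ∀ i, y i = pick i (range fun j : Iio i => y j) (hsmall i _) :=
    wellFounded_lt.fix_eq _
  refine ⟨y, fun i => hy i ▸ hpickS _ _ _, linearIndependent_of_notMem_span_image_Iio fun i => ?_⟩
  have := hpickspan i _ (hsmall i fun j => y j)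
  rw [← hy i, ← image_eq_range, ← image_comp] at this
  exact this

theorem exists_mem_linearIndependent_comp {κ : Type*} (hκ : #κ ≤ 𝔠) (φ : M →+ V)
    (hker : #φ.ker < 𝔠) (S : κ → Set M) (hS : ∀ k, 𝔠 ≤ #(S k)) :
    ∃ y : κ → M, (∀ k, y k ∈ S k) ∧ LinearIndependent K (φ ∘ y) := by
  rcases isEmpty_or_nonempty κ with hempty | ⟨⟨k₀⟩⟩
  · exact ⟨isEmptyElim, isEmptyElim, linearIndependent_empty_type⟩
  obtain ⟨e⟩ : Nonempty (κ ↪ (𝔠 : Cardinal).ord.ToType) := by rwa [← le_def, mk_ord_toType]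
  let S' : (𝔠 : Cardinal).ord.ToType → Set M := Function.extend e S fun _ => S k₀
  have hS' : ∀ i, 𝔠 ≤ #(S' i) := by
    intro i
    by_cases h : ∃ k, e k = i
    · obtain ⟨k, rfl⟩ := h
      simpa only [S', e.injective.extend_apply] using hS k
    · simpa only [S', Function.extend_apply' _ _ _ h] using hS k₀
  have hIio : ∀ i : (𝔠 : Cardinal).ord.ToType, #(Iio i) < 𝔠 := fun i =>
    (mk_Iio_lt i (by rw [mk_ord_toType, Ordinal.type_toType])).trans_eq (mk_ord_toType _)
  obtain ⟨y, hyS, hy⟩ :=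
    exists_mem_linearIndependent_comp_of_wellFoundedLT (K := K) hIio φ hker S' hS'
  refine ⟨y ∘ e, fun k => ?_, hy.comp e e.injective⟩
  simpa only [Function.comp_apply, S', e.injective.extend_apply] using hyS (e k)

end Selection

section Thick

variable {X : Type*} [TopologicalSpace X] [MeasurableSpace X] {μ : Measure X} [μ.InnerRegular]
  {s : Set X}

theorem measure_compl_eq_zero_of_inter_isCompact_nonempty (hs : NullMeasurableSet s μ)
    (h : ∀ C, IsCompact C → 0 < μ C → (s ∩ C).Nonempty) : μ sᶜ = 0 := by
  obtain ⟨T, hTs, hT, hTae⟩ := hs.compl.exists_measurable_subset_ae_eq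
  rw [← measure_congr hTae]
  by_contra hpos
  obtain ⟨C, hCT, hC, hCpos⟩ := hT.exists_lt_isCompact (pos_iff_ne_zero.mpr hpos)
  obtain ⟨x, hxs, hxC⟩ := h C hC hCpos
  exact hTs (hCT hxC) hxs

theorem dense_of_inter_isCompact_nonempty [OpensMeasurableSpace X] [μ.IsOpenPosMeasure]
    (h : ∀ C, IsCompact C → 0 < μ C → (s ∩ C).Nonempty) : Dense s := by
  refine dense_iff_inter_open.mpr fun U hU hUne => ?_
  obtain ⟨C, hCU, hC, hCpos⟩ := hU.measurableSet.exists_lt_isCompact (hU.measure_pos μ hUne)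
  obtain ⟨x, hxs, hxC⟩ := h C hC hCpos
  exact ⟨x, hCU hxC, hxs⟩

end Thick

theorem AddSubgroup.not_nullMeasurableSet_of_inter_isCompact_nonempty {G : Type*} [AddGroup G]
    [TopologicalSpace G] [MeasurableSpace G] [MeasurableAdd G] {μ : Measure G} [NeZero μ]
    [μ.IsAddLeftInvariant] [μ.InnerRegular] {D : AddSubgroup G} (hD : D ≠ ⊤)
    (h : ∀ C, IsCompact C → 0 < μ C → ((D : Set G) ∩ C).Nonempty) :
    ¬ NullMeasurableSet (D : Set G) μ := by
  intro hDm
  have hcompl := measure_compl_eq_zero_of_inter_isCompact_nonempty hDm h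
  obtain ⟨e, he⟩ : ∃ e, e ∉ D := by simpa [SetLike.ext_iff] using hD
  have htranslate : (fun x => e + x) ⁻¹' D ⊆ (D : Set G)ᶜ := fun x hx hxD =>
    he (by simpa using D.sub_mem hx hxD)
  have hD0 : μ D = 0 := by
    rw [← measure_preimage_add μ e]
    exact measure_mono_null htranslate hcompl
  exact NeZero.ne μ (Measure.measure_univ_eq_zero.mp (by
    rw [← union_compl_self (D : Set G)]
    exact measure_union_null hD0 hcompl))

theorem MeasurableSpace.mk_setOf_measurableSet_le_continuum {α : Type*} [m : MeasurableSpace α]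
    [MeasurableSpace.CountablyGenerated α] : #{s : Set α | MeasurableSet s} ≤ 𝔠 := by
  obtain ⟨b, hb, rfl⟩ := CountablyGenerated.isCountablyGenerated (α := α)
  exact cardinal_measurableSet_le_continuum (hb.le_aleph0.trans aleph0_le_continuum)

theorem continuum_le_mk_of_isClosed_of_measure_pos {X : Type*} [TopologicalSpace X] [PolishSpace X]
    [MeasurableSpace X] {μ : Measure X} [NullSingletonClass μ] {C : Set X} (hC : IsClosed C)
    (hpos : 0 < μ C) : 𝔠 ≤ #C := by
  obtain ⟨f, hfC, -, hf⟩ := hC.exists_nat_bool_injection_of_not_countable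
    fun hcount => hpos.ne' (hcount.measure_zero μ)
  simpa using lift_mk_le_lift_mk_of_injective (f := fun x => (⟨f x, hfC (mem_range_self x)⟩ : C))
    fun x x' h => hf (congrArg Subtype.val h)

theorem nhdsNE_zero_neBot_of_infinite {G : Type*} [AddGroup G] [TopologicalSpace G]
    [IsTopologicalAddGroup G] [CompactSpace G] [Infinite G] : (𝓝[≠] (0 : G)).NeBot := by
  rw [Filter.neBot_iff, Ne, ← isOpen_singleton_iff_punctured_nhds]
  intro h
  have := discreteTopology_of_isOpen_singleton_zero h
  have := finite_of_compact_of_discrete (X := G)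
  exact not_finite G

theorem LocalizedModule.ker_mkLinearMap_int_eq_torsion (M : Type*) [AddCommGroup M] :
    (LocalizedModule.mkLinearMap (nonZeroDivisors ℤ) M).toAddMonoidHom.ker =
      AddCommGroup.torsion M := by
  ext m
  rw [AddMonoidHom.mem_ker, LinearMap.toAddMonoidHom_coe, LocalizedModule.mkLinearMap_apply,
    ← LocalizedModule.zero_mk 1, LocalizedModule.mk_eq, AddCommGroup.mem_torsion,
    isOfFinAddOrder_iff_zsmul_eq_zero]
  simp [Submonoid.smul_def, mem_nonZeroDivisors_iff_ne_zero]

theorem exists_dense_not_nullMeasurableSet_addSubgroup {M : Type*} [AddCommGroup M]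
    [TopologicalSpace M] [IsTopologicalAddGroup M] [PolishSpace M] [LocallyCompactSpace M]
    [(𝓝[≠] (0 : M)).NeBot] [MeasurableSpace M] [BorelSpace M] (μ : Measure M)
    [μ.IsAddHaarMeasure] {K V : Type*} [DivisionRing K] [Countable K] [AddCommGroup V]
    [Module K V] (φ : M →+ V) (hker : #φ.ker < 𝔠) :
    ∃ D : AddSubgroup M, Dense (D : Set M) ∧ ¬ NullMeasurableSet (D : Set M) μ ∧ #(M ⧸ D) = 𝔠 := by
  let 𝒦 : Set (Set M) := {C | IsCompact C ∧ 0 < μ C}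
  have hbig : ∀ C : Set M, IsClosed C → 0 < μ C → 𝔠 ≤ #C := fun _ =>
    continuum_le_mk_of_isClosed_of_measure_pos
  have hM : #M = 𝔠 := by
    refine le_antisymm ?_ <| by
      simpa using hbig univ isClosed_univ (Measure.measure_univ_pos.mpr (NeZero.ne μ))
    refine le_trans ?_ (MeasurableSpace.mk_setOf_measurableSet_le_continuum (α := M))
    exact mk_le_of_injective (f := fun x : M => (⟨{x}, measurableSet_singleton x⟩ :
      {s : Set M | MeasurableSet s})) fun x x' h => singleton_injective (congrArg Subtype.val h)
  have h𝒦 : #𝒦 ≤ 𝔠 := (mk_le_mk_of_subset fun C hC => hC.1.isClosed.measurableSet).trans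
    MeasurableSpace.mk_setOf_measurableSet_le_continuum
  obtain ⟨y, hyS, hy⟩ := exists_mem_linearIndependent_comp (K := K) (κ := 𝒦 ⊕ M)
    (by simpa [hM] using add_le_of_le aleph0_le_continuum h𝒦 le_rfl) φ hker
    (Sum.elim Subtype.val fun _ => univ)
    (Sum.forall.mpr ⟨fun C => hbig C.1 C.2.1.isClosed C.2.2, fun _ => by simp [hM]⟩)
  set D := AddSubgroup.closure (y '' range Sum.inl)
  have hD : ∀ C, IsCompact C → 0 < μ C → ((D : Set M) ∩ C).Nonempty := fun C hC hpos =>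
    ⟨y (.inl ⟨C, hC, hpos⟩), AddSubgroup.subset_closure (mem_image_of_mem y (mem_range_self _)),
      hyS (.inl ⟨C, hC, hpos⟩)⟩
  have hinj : Function.Injective fun m : M => (y (.inr m) : M ⧸ D) := fun m m' h =>
    Sum.inr_injective (hy.injOn_mk_closure_image φ _ (by simp) (by simp) h)
  have hquot : #(M ⧸ D) = 𝔠 := le_antisymm
    (hM ▸ mk_le_of_surjective QuotientAddGroup.mk_surjective) (hM ▸ mk_le_of_injective hinj)
  have hDtop : D ≠ ⊤ := by
    intro htop
    have : Subsingleton (M ⧸ D) := htop ▸ QuotientAddGroup.subsingleton_quotient_top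
    exact (nat_lt_continuum 1).not_ge (by simpa [hquot] using le_one_iff_subsingleton.mpr this)
  exact ⟨D, dense_of_inter_isCompact_nonempty (μ := μ) hD,
    AddSubgroup.not_nullMeasurableSet_of_inter_isCompact_nonempty hDtop hD, hquot⟩

theorem stmt7_general (M : Type*) [AddCommGroup M] [TopologicalSpace M] [IsTopologicalAddGroup M]
    [CompactSpace M] [TopologicalSpace.MetrizableSpace M] [Infinite M]
    [MeasurableSpace M] [BorelSpace M]
    (μ : Measure M) [μ.IsAddHaarMeasure]
    (hcase : Cardinal.mk (AddCommGroup.torsion M) < Cardinal.continuum ∨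
      ∃ p : ℕ, p.Prime ∧ ∀ x : M, p • x = 0) :
    ∃ D : AddSubgroup M, Dense (D : Set M) ∧ ¬ NullMeasurableSet (D : Set M) μ ∧
      Cardinal.mk (M ⧸ D) = Cardinal.continuum := by
  have : PolishSpace M := by
    let := TopologicalSpace.metrizableSpaceMetric M
    infer_instance
  have := nhdsNE_zero_neBot_of_infinite (G := M)
  rcases hcase with htorsion | ⟨p, hp, hpx⟩
  · have : Countable (FractionRing ℤ) := (FractionRing.algEquiv ℤ ℚ).injective.countable
    exact exists_dense_not_nullMeasurableSet_addSubgroup μ (K := FractionRing ℤ)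
      (LocalizedModule.mkLinearMap (nonZeroDivisors ℤ) M).toAddMonoidHom
      (by rwa [LocalizedModule.ker_mkLinearMap_int_eq_torsion])
  · have : Fact p.Prime := ⟨hp⟩
    let := AddCommGroup.zmodModule hpx
    exact exists_dense_not_nullMeasurableSet_addSubgroup μ (K := ZMod p) (AddMonoidHom.id M)
      (by simpa using nat_lt_continuum 1)

theorem stmt7 (M : Type*) [AddCommGroup M] [TopologicalSpace M] [IsTopologicalAddGroup M]
    [CompactSpace M] [T2Space M] [TopologicalSpace.MetrizableSpace M] [Infinite M]
    [MeasurableSpace M] [BorelSpace M]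
    (μ : Measure M) [μ.IsAddHaarMeasure] (hμ : μ Set.univ = 1)
    (hcase : Cardinal.mk (AddCommGroup.torsion M) < Cardinal.continuum ∨
      ∃ p : ℕ, p.Prime ∧ ∀ x : M, p • x = 0) :
    ∃ D : AddSubgroup M, Dense (D : Set M) ∧ ¬ NullMeasurableSet (D : Set M) μ ∧
      Cardinal.mk (M ⧸ D) = Cardinal.continuum :=
  stmt7_general M μ hcase
end

section
/- Let K be a compact Hausdorff topological group and let H be a proper subgroup of K that is G_δ-dense in K (that is, H meets every nonempty G_δ-subset of K). Then H is not Haar-measurable. -/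
open MeasureTheory

/-!
A Haar-null set cannot be `Gδ`-dense: by Halmos' theorem Haar measure is completion regular, so
the complement of a null set contains a level set `f ⁻¹' {1}` of positive measure of a continuous
function, and such a level set is a nonempty `Gδ`. Hence a Haar-measurable `Gδ`-dense subgroup has
positive measure, so it is open by Steinhaus' theorem, hence closed; its complement is then an
open, hence `Gδ`, set missing it, so it must be empty.
-/

/-- A subset `D` of a topological space is `Gδ`-dense if it meets every nonempty
`Gδ`-subset. -/
def GDeltaDense {X : Type*} [TopologicalSpace X] (D : Set X) : Prop :=
  ∀ A : Set X, IsGδ A → A.Nonempty → (D ∩ A).Nonempty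

open Pointwise Topology

theorem GDeltaDense.eq_univ_of_isClosed {X : Type*} [TopologicalSpace X] {D : Set X}
    (hD : GDeltaDense D) (hclosed : IsClosed D) : D = Set.univ := by
  by_contra hne
  obtain ⟨x, hx, hxc⟩ := hD Dᶜ hclosed.isOpen_compl.isGδ (Set.nonempty_compl.2 hne)
  exact hxc hx

section LocallyCompactGroup

variable {G : Type*} [Group G] [TopologicalSpace G] [IsTopologicalGroup G]
  [LocallyCompactSpace G] [MeasurableSpace G] [BorelSpace G] (μ : Measure G) [μ.IsHaarMeasure]

theorem Subgroup.isOpen_of_nullMeasurableSet_of_measure_pos [μ.InnerRegular] {H : Subgroup G}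
    (hH : NullMeasurableSet (H : Set G) μ) (hpos : 0 < μ H) : IsOpen (H : Set G) := by
  obtain ⟨t, htH, ht, ht_ae⟩ := hH.exists_measurable_subset_ae_eq
  have hnhds : t / t ∈ 𝓝 (1 : G) :=
    Measure.div_mem_nhds_one_of_haar_pos μ t ht (measure_congr ht_ae ▸ hpos)
  refine H.isOpen_of_mem_nhds (Filter.mem_of_superset hnhds ?_)
  rintro _ ⟨a, ha, b, hb, rfl⟩
  exact H.div_mem (htH ha) (htH hb)

theorem MeasurableSet.exists_isGδ_nonempty_subset [μ.InnerRegularCompactLTTop] {s : Set G}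
    (hs : MeasurableSet s) (h0 : μ s ≠ 0) (htop : μ s ≠ ⊤) :
    ∃ L ⊆ s, IsGδ L ∧ L.Nonempty := by
  obtain ⟨L, hLs, ⟨f, hf, -, rfl⟩, hL⟩ :=
    Measure.innerRegularWRT_preimage_one_hasCompactSupport_measure_ne_top_of_group
      ⟨hs, htop⟩ 0 (pos_iff_ne_zero.2 h0)
  exact ⟨_, hLs, isClosed_singleton.isGδ.preimage hf, nonempty_of_measure_ne_zero hL.ne'⟩

theorem GDeltaDense.measure_ne_zero [μ.InnerRegularCompactLTTop] {D : Set G}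
    (hD : GDeltaDense D) : μ D ≠ 0 := by
  intro hD0
  obtain ⟨C, hC, hC1⟩ := exists_compact_mem_nhds (1 : G)
  set U := interior C \ toMeasurable μ D
  have hUm : MeasurableSet U :=
    isOpen_interior.measurableSet.diff (measurableSet_toMeasurable μ D)
  have hU : μ U = μ (interior C) := measure_sdiff_null (by rwa [measure_toMeasurable])
  have hU0 : μ U ≠ 0 :=
    hU ▸ (isOpen_interior.measure_pos μ ⟨1, mem_interior_iff_mem_nhds.2 hC1⟩).ne'
  have hUtop : μ U ≠ ⊤ :=
    hU ▸ (measure_mono interior_subset |>.trans_lt hC.measure_lt_top).ne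
  obtain ⟨L, hLU, hLGδ, hLne⟩ := hUm.exists_isGδ_nonempty_subset μ hU0 hUtop
  obtain ⟨x, hxD, hxL⟩ := hD L hLGδ hLne
  exact (hLU hxL).2 (subset_toMeasurable μ D hxD)

end LocallyCompactGroup

theorem stmt11_general (K : Type*) [Group K] [TopologicalSpace K] [IsTopologicalGroup K]
    [CompactSpace K] [MeasurableSpace K] [BorelSpace K]
    (μ : Measure K) [μ.IsHaarMeasure]
    (H : Subgroup K) (hHproper : H ≠ ⊤) (hHdense : GDeltaDense (H : Set K)) :
    ¬ NullMeasurableSet (H : Set K) μ := by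
  intro hH
  have hpos : 0 < μ H := pos_iff_ne_zero.2 (hHdense.measure_ne_zero μ)
  have hopen : IsOpen (H : Set K) := H.isOpen_of_nullMeasurableSet_of_measure_pos μ hH hpos
  exact hHproper <| Subgroup.coe_eq_univ.1 <|
    hHdense.eq_univ_of_isClosed (H.isClosed_of_isOpen hopen)

theorem stmt11 (K : Type*) [Group K] [TopologicalSpace K] [IsTopologicalGroup K]
    [CompactSpace K] [T2Space K] [MeasurableSpace K] [BorelSpace K]
    (μ : Measure K) [μ.IsHaarMeasure] (hμ : μ Set.univ = 1)
    (H : Subgroup K) (hHproper : H ≠ ⊤) (hHdense : GDeltaDense (H : Set K)) :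
    ¬ NullMeasurableSet (H : Set K) μ :=
  stmt11_general K μ H hHproper hHdense
end

section
/- Let (p_k)_{k<ω} be a sequence of primes (repetitions allowed), let (r_k)_{k<ω} be positive integers, let A = ⊕_{k<ω} ℤ(p_k^{r_k}) be the direct sum, and let (x_n)_{n<ω} be an injective sequence in A such that: (i) there is an infinite set S ⊆ ω with x_n(k) = 0 for all n < ω and all k ∈ S; and (ii) for every k < ω the set {n < ω : x_n(k) ≠ 0} is finite. Then there is a set H of homomorphisms from A to 𝕋 with |H| = 𝔠 such that H separates points of A and, for every h ∈ H, h(x_n) → 0 in 𝕋. -/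
open Filter Topology DirectSum

local notation "𝕋" => AddCircle (1 : ℝ)

noncomputable def intToT (m : ℕ) : ℤ →+ 𝕋 :=
  AddMonoidHom.mk' (fun z => (((z : ℝ) / m : ℝ) : 𝕋)) (by
    intro a b
    push_cast
    rw [add_div]
    exact AddCircle.coe_add (p := (1:ℝ)) _ _)

lemma intToT_apply (m : ℕ) (z : ℤ) : intToT m z = (((z : ℝ) / m : ℝ) : 𝕋) := rfl

noncomputable def myChar (m : ℕ) [NeZero m] : ZMod m →+ 𝕋 :=
  ZMod.lift m ⟨intToT m, by
    rw [intToT_apply]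
    push_cast
    rw [div_self (by exact_mod_cast (NeZero.ne m) : ((m:ℝ) ≠ 0))]
    exact AddCircle.coe_period (p := (1:ℝ))⟩

lemma myChar_apply (m : ℕ) [NeZero m] (a : ZMod m) :
    myChar m a = (((a.val : ℝ) / m : ℝ) : 𝕋) := by
  have : a = ((a.val : ℤ) : ZMod m) := by
    push_cast
    rw [ZMod.natCast_val, ZMod.cast_id]
  conv_lhs => rw [this]
  rw [myChar, ZMod.lift_coe, intToT_apply]
  norm_num

lemma myChar_ne_zero (m : ℕ) [NeZero m] (a : ZMod m) (ha : a ≠ 0) : myChar m a ≠ 0 := by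
  rw [myChar_apply]
  intro h
  rw [AddCircle.coe_eq_zero_iff] at h
  obtain ⟨n, hn⟩ := h
  have hm : (0:ℝ) < m := by
    have := Nat.pos_of_ne_zero (NeZero.ne m); exact_mod_cast this
  have hav : 0 < a.val := ZMod.val_pos.mpr ha
  have h1 : (0:ℝ) < (a.val : ℝ) / m := by
    have : (0:ℝ) < (a.val : ℝ) := by exact_mod_cast hav
    positivity
  have h2 : (a.val : ℝ) / m < 1 := by
    rw [div_lt_one hm]
    exact_mod_cast a.val_lt
  rw [zsmul_eq_mul, mul_one] at hn
  rw [← hn] at h1 h2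
  have h3 : 0 < n := by exact_mod_cast h1
  have h4 : n < 1 := by exact_mod_cast h2
  omega

lemma toAddMonoid_eq_zero {ι : Type*} [DecidableEq ι] {β : ι → Type*} [∀ i, AddCommMonoid (β i)]
    {γ : Type*} [AddCommMonoid γ] (φ : ∀ i, β i →+ γ) (a : ⨁ i, β i)
    (h : ∀ i, φ i (a i) = 0) : DirectSum.toAddMonoid φ a = 0 := by
  letI : ∀ (i) (x : β i), Decidable (x ≠ 0) := fun i x => Classical.dec _
  rw [DirectSum.toAddMonoid, DFinsupp.liftAddHom_apply]; erw [DFinsupp.sumAddHom_apply]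
  exact Finset.sum_eq_zero fun i _ => h i

lemma toAddMonoid_single {ι : Type*} [DecidableEq ι] {β : ι → Type*} [∀ i, AddCommMonoid (β i)]
    {γ : Type*} [AddCommMonoid γ] (φ : ∀ i, β i →+ γ) (a : ⨁ i, β i) (k : ι)
    (h : ∀ i, i ≠ k → φ i = 0) : DirectSum.toAddMonoid φ a = φ k (a k) := by
  letI : ∀ (i) (x : β i), Decidable (x ≠ 0) := fun i x => Classical.dec _
  rw [DirectSum.toAddMonoid, DFinsupp.liftAddHom_apply]; erw [DFinsupp.sumAddHom_apply]
  rw [DFinsupp.sum, Finset.sum_eq_single k]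
  · intro b _ hb; rw [h b hb]; rfl
  · intro hk
    have : a k = 0 := by
      by_contra h0
      exact hk (DFinsupp.mem_support_iff.mpr h0)
    rw [this, map_zero]

theorem stmt16 (p : ℕ → ℕ) (hp : ∀ k, (p k).Prime) (r : ℕ → ℕ) (hr : ∀ k, 0 < r k)
    (x : ℕ → ⨁ k : ℕ, ZMod (p k ^ r k)) (hx : Function.Injective x)
    (S : Set ℕ) (hSinf : S.Infinite)
    (hS : ∀ n : ℕ, ∀ k ∈ S, x n k = 0)
    (hfin : ∀ k : ℕ, {n : ℕ | x n k ≠ 0}.Finite) :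
    ∃ H : Set ((⨁ k : ℕ, ZMod (p k ^ r k)) →+ 𝕋),
      Cardinal.mk H = Cardinal.continuum ∧
      (∀ a : ⨁ k : ℕ, ZMod (p k ^ r k), a ≠ 0 → ∃ h ∈ H, h a ≠ 0) ∧
      (∀ h ∈ H, Tendsto (fun n => h (x n)) atTop (𝓝 (0 : 𝕋))) := by
  classical
  haveI hNZ : ∀ k, NeZero (p k ^ r k) := fun k =>
    ⟨pow_ne_zero _ (hp k).ne_zero⟩
  have hm2 : ∀ k, 1 < p k ^ r k := fun k => Nat.one_lt_pow (hr k).ne' (hp k).one_lt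
  set φ : Set ℕ → ∀ k, ZMod (p k ^ r k) →+ 𝕋 :=
    fun T k => if k ∈ T then myChar (p k ^ r k) else 0 with hφ
  set F : Set ℕ → ((⨁ k : ℕ, ZMod (p k ^ r k)) →+ 𝕋) :=
    fun T => DirectSum.toAddMonoid (φ T) with hF
  set C : Set (Set ℕ) := {T | (T \ S).Finite} with hC
  have hone : ∀ k, (1 : ZMod (p k ^ r k)) ≠ 0 := by
    intro k
    haveI : Fact (1 < p k ^ r k) := ⟨hm2 k⟩
    exact one_ne_zero
  have hFinj : Function.Injective F := by
    intro T T' hTT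
    ext k
    have h1 := congrArg (fun f => f (DirectSum.of (fun j => ZMod (p j ^ r j)) k 1)) hTT
    simp only [hF, DirectSum.toAddMonoid_of] at h1
    by_cases hk : k ∈ T <;> by_cases hk' : k ∈ T' <;>
      simp only [hφ, hk, hk', if_pos, if_neg, if_true, if_false] at h1 ⊢
    · exact absurd h1 (by simpa using myChar_ne_zero _ _ (hone k))
    · exact absurd h1.symm (by simpa using myChar_ne_zero _ _ (hone k))
  refine ⟨F '' C, ?_, ?_, ?_⟩
  · rw [Cardinal.mk_image_eq hFinj]
    apply le_antisymm
    · refine le_trans (Cardinal.mk_subtype_le _) ?_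
      rw [Cardinal.mk_set, Cardinal.mk_nat, Cardinal.two_power_aleph0]
    · haveI := hSinf.to_subtype
      have hmkS : Cardinal.mk ↑S = Cardinal.aleph0 := Cardinal.mk_eq_aleph0 ↑S
      have hinj : Function.Injective (fun (U : Set ↑S) =>
          (⟨Subtype.val '' U, by
            refine Set.Finite.subset Set.finite_empty ?_
            rintro a ⟨⟨u, hu, rfl⟩, ha⟩
            exact absurd u.2 ha⟩ : ↑C)) := by
        intro U U' h
        have h2 : Subtype.val '' U = Subtype.val '' U' := congrArg Subtype.val h
        exact Set.image_injective.mpr Subtype.val_injective h2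
      have := Cardinal.mk_le_of_injective hinj
      rw [Cardinal.mk_set, hmkS, Cardinal.two_power_aleph0] at this
      exact this
  · intro a ha
    obtain ⟨k, hk⟩ : ∃ k, a k ≠ 0 := by
      by_contra h
      push_neg at h
      exact ha (DFinsupp.ext h)
    refine ⟨F {k}, ⟨{k}, ?_, rfl⟩, ?_⟩
    · exact (Set.finite_singleton k).subset Set.diff_subset
    · rw [hF]
      rw [toAddMonoid_single (φ {k}) a k (fun i hi => by simp [hφ, hi])]
      simp only [hφ, Set.mem_singleton_iff, if_pos rfl]
      exact myChar_ne_zero _ _ hk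
  · rintro h ⟨T, hT, rfl⟩
    have hTS : (T \ S).Finite := hT
    have hbig : (⋃ k ∈ T \ S, {n : ℕ | x n k ≠ 0}).Finite :=
      hTS.biUnion (fun k _ => hfin k)
    apply Tendsto.congr' _ tendsto_const_nhds (f₁ := fun _ => (0:𝕋))
    rw [EventuallyEq, eventually_atTop]
    obtain ⟨N, hN⟩ := hbig.bddAbove
    refine ⟨N + 1, fun n hn => ?_⟩
    symm
    rw [hF]
    apply toAddMonoid_eq_zero
    intro k
    by_cases hkT : k ∈ T
    · by_cases hkS : k ∈ S
      · rw [hS n k hkS, map_zero]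
      · have hx0 : x n k = 0 := by
          by_contra h0
          have hmem : n ∈ ⋃ k ∈ T \ S, {n : ℕ | x n k ≠ 0} :=
            Set.mem_biUnion ⟨hkT, hkS⟩ h0
          have := hN hmem
          omega
        rw [hx0, map_zero]
    · simp [hφ, hkT]
end

section
/- There exist an injective sequence (x_n)_{n<ω} in ℤ and a point-separating subgroup H of Hom(ℤ,𝕋) with |H| = 𝔠 such that h(x_n) → 0 in 𝕋 for every h ∈ H; that is, x_n → 0 in the totally bounded group topology 𝒯_H induced on ℤ by H. -/
open Filter Topology

local notation "𝕋" => AddCircle (1 : ℝ)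

/-!
Take `x n = (n + 3)!` and let `H` be the group of characters `h` with `h (x n) → 0`, so that
`x n → 0` in `𝒯_H` by construction. For `a ≠ 0` the character `m ↦ m / 2a` lies in `H`, since
`2a ∣ (n + 3)!` for large `n`, and sends `a` to `1/2`. For `s ⊆ ℕ` put
`α_s = ∑_{k ∈ s} 1 / (k + 3)!`: then `(n + 3)! α_s` is an integer plus a tail of size at most
`2 / (n + 4)`, so `m ↦ m α_s` lies in `H`. Each term `1 / (k + 3)!` exceeds the sum of all later
ones, so `s ↦ α_s` is injective, and as `α_s ∈ [0, 1/3]` the characters are distinct too.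
-/

open Nat Set

def characterizedSubgroup {G : Type*} [AddCommGroup G] (x : ℕ → G) : AddSubgroup (G →+ 𝕋) where
  carrier := {h | Tendsto (fun n => h (x n)) atTop (𝓝 0)}
  zero_mem' := tendsto_const_nhds
  add_mem' {h₁ h₂} h₁_mem h₂_mem := by simpa using h₁_mem.add h₂_mem
  neg_mem' {h} h_mem := by simpa using h_mem.neg

lemma mem_characterizedSubgroup {G : Type*} [AddCommGroup G] {x : ℕ → G} {h : G →+ 𝕋} :
    h ∈ characterizedSubgroup x ↔ Tendsto (fun n => h (x n)) atTop (𝓝 0) :=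
  Iff.rfl

lemma tendsto_weakTopOf_iff {G ι : Type*} [AddCommGroup G] (H : AddSubgroup (G →+ 𝕋))
    {l : Filter ι} {x : ι → G} {a : G} :
    Tendsto x l (@nhds G (weakTopOf H) a) ↔ ∀ h ∈ H, Tendsto (fun i => h (x i)) l (𝓝 (h a)) := by
  rw [weakTopOf, nhds_iInf, tendsto_iInf]
  simp only [nhds_induced, tendsto_comap_iff, Subtype.forall, Function.comp_def]

noncomputable def circleChar (r : ℝ) : ℤ →+ 𝕋 := zmultiplesHom 𝕋 (r : 𝕋)

lemma circleChar_apply (r : ℝ) (m : ℤ) : circleChar r m = ((m * r : ℝ) : 𝕋) := by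
  rw [circleChar, zmultiplesHom_apply, ← AddCircle.coe_zsmul, zsmul_eq_mul]

lemma coe_eq_zero_of_mem_zmultiples_one {y : ℝ} (hy : y ∈ AddSubgroup.zmultiples (1 : ℝ)) :
    (y : 𝕋) = 0 :=
  (QuotientAddGroup.eq_zero_iff y).2 hy

lemma circleChar_injOn : Set.InjOn circleChar (Ico 0 1) := by
  intro r hr r' hr' h
  have h1 := DFunLike.congr_fun h 1
  simp only [circleChar_apply, Int.cast_one, one_mul] at h1
  exact (AddCircle.coe_eq_coe_iff_of_mem_Ico (by rwa [zero_add]) (by rwa [zero_add])).1 h1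

lemma mk_intHom_circle_le_continuum : Cardinal.mk (ℤ →+ 𝕋) ≤ Cardinal.continuum :=
  calc Cardinal.mk (ℤ →+ 𝕋) = Cardinal.mk 𝕋 := (Cardinal.mk_congr (zmultiplesHom 𝕋)).symm
    _ ≤ Cardinal.mk ℝ := Cardinal.mk_le_of_surjective QuotientAddGroup.mk_surjective
    _ = Cardinal.continuum := Cardinal.mk_real

section Lacunary

variable {c : ℕ → ℝ} (hc0 : ∀ k, 0 ≤ c k) (hc : Summable c)
include hc0 hc

lemma tsum_indicator_nat_add_le (s : Set ℕ) (m : ℕ) :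
    ∑' j, s.indicator c (j + m) ≤ ∑' j, c (j + m) :=
  ((summable_nat_add_iff m).2 (hc.indicator s)).tsum_le_tsum
    (fun _ => Set.indicator_le_self' (fun k _ => hc0 k) _) ((summable_nat_add_iff m).2 hc)

lemma tsum_indicator_lt_of_first_diff {s t : Set ℕ} {m : ℕ}
    (hdom : ∑' j, c (j + (m + 1)) < c m) (hms : m ∈ s) (hmt : m ∉ t)
    (hst : ∀ k < m, k ∈ s ↔ k ∈ t) :
    ∑' k, t.indicator c k < ∑' k, s.indicator c k := by
  have split (u : Set ℕ) : ∑' k, u.indicator c k = ∑ k ∈ Finset.range m, u.indicator c k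
      + u.indicator c m + ∑' j, u.indicator c (j + (m + 1)) := by
    rw [← Finset.sum_range_succ, (hc.indicator u).sum_add_tsum_nat_add]
  have hprefix : ∑ k ∈ Finset.range m, t.indicator c k = ∑ k ∈ Finset.range m, s.indicator c k :=
    Finset.sum_congr rfl fun k hk => by
      classical
      rw [Set.indicator_apply, Set.indicator_apply, hst k (Finset.mem_range.1 hk)]
  have htail_t := tsum_indicator_nat_add_le hc0 hc t (m + 1)
  have htail_s : 0 ≤ ∑' j, s.indicator c (j + (m + 1)) :=
    tsum_nonneg fun _ => Set.indicator_nonneg (fun k _ => hc0 k) _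
  rw [split s, split t, hprefix, Set.indicator_of_mem hms, Set.indicator_of_notMem hmt]
  linarith

lemma injective_tsum_indicator (hdom : ∀ k, ∑' j, c (j + (k + 1)) < c k) :
    Function.Injective fun s : Set ℕ => ∑' k, s.indicator c k := by
  intro s t hst
  by_contra hne
  have hdiff : ∃ k, ¬(k ∈ s ↔ k ∈ t) := by
    contrapose! hne
    exact Set.ext hne
  classical
  set m := Nat.find hdiff
  have hm : ¬(m ∈ s ↔ m ∈ t) := Nat.find_spec hdiff
  have hmin : ∀ k < m, k ∈ s ↔ k ∈ t := fun k hk => not_not.1 (Nat.find_min hdiff hk)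
  by_cases hms : m ∈ s
  · exact (tsum_indicator_lt_of_first_diff hc0 hc (hdom m) hms (by tauto) hmin).ne' hst
  · exact (tsum_indicator_lt_of_first_diff hc0 hc (hdom m) (by tauto) hms
      fun k hk => (hmin k hk).symm).ne hst

end Lacunary

lemma tsum_inv_factorial_add_le {b : ℕ} (hb : 1 ≤ b) :
    ∑' j, ((j + b)! : ℝ)⁻¹ ≤ 2 * (b ! : ℝ)⁻¹ := by
  have hgeom : Summable fun j : ℕ => (b ! : ℝ)⁻¹ * (1 / 2) ^ j :=
    (summable_geometric_two).mul_left _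
  have hterm : ∀ j, ((j + b)! : ℝ)⁻¹ ≤ (b ! : ℝ)⁻¹ * (1 / 2) ^ j := fun j => by
    have : b ! * 2 ^ j ≤ (j + b)! :=
      calc b ! * 2 ^ j ≤ b ! * (b + 1) ^ j := by gcongr; omega
        _ ≤ (b + j)! := factorial_mul_pow_le_factorial
        _ = (j + b)! := by rw [add_comm]
    rw [one_div, inv_pow, ← mul_inv]
    exact inv_anti₀ (by positivity) (by exact_mod_cast this)
  calc ∑' j, ((j + b)! : ℝ)⁻¹ ≤ ∑' j : ℕ, (b ! : ℝ)⁻¹ * (1 / 2) ^ j :=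
        (hgeom.of_nonneg_of_le (fun _ => by positivity) hterm).tsum_le_tsum hterm hgeom
    _ = 2 * (b ! : ℝ)⁻¹ := by rw [tsum_mul_left, tsum_geometric_two, mul_comm]

lemma summable_inv_factorial_add (b : ℕ) : Summable fun j => ((j + b)! : ℝ)⁻¹ := by
  have h := Real.summable_pow_div_factorial 1
  simp only [one_pow, one_div] at h
  exact (summable_nat_add_iff b).2 h

lemma two_mul_inv_factorial_add_four (n : ℕ) :
    2 * ((n + 4)! : ℝ)⁻¹ = 2 / ((n + 4 : ℕ) : ℝ) * ((n + 3)! : ℝ)⁻¹ := by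
  rw [show n + 4 = n + 3 + 1 from rfl, factorial_succ]
  push_cast
  field_simp

lemma tsum_inv_factorial_tail_le (n : ℕ) :
    ∑' j, ((j + (n + 1) + 3)! : ℝ)⁻¹ ≤ 2 * ((n + 4)! : ℝ)⁻¹ :=
  tsum_inv_factorial_add_le (b := n + 4) (by omega)

lemma factorial_mul_inv_factorial_mem_zmultiples {k n : ℕ} (hkn : k ≤ n) :
    (n ! : ℝ) * (k ! : ℝ)⁻¹ ∈ AddSubgroup.zmultiples (1 : ℝ) := by
  rw [← div_eq_mul_inv, ← Nat.cast_div (factorial_dvd_factorial hkn) (by positivity)]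
  exact_mod_cast AddSubgroup.intCast_mem_zmultiples_one (R := ℝ) ((n ! / k ! : ℕ) : ℤ)

noncomputable def factorialSeries (s : Set ℕ) : ℝ :=
  ∑' k, s.indicator (fun k => ((k + 3)! : ℝ)⁻¹) k

lemma factorialSeries_injective : Function.Injective factorialSeries := by
  refine injective_tsum_indicator (fun k => by positivity) (summable_inv_factorial_add 3)
    fun k => (tsum_inv_factorial_tail_le k).trans_lt ?_
  rw [two_mul_inv_factorial_add_four]
  refine mul_lt_of_lt_one_left (by positivity) ((div_lt_one (by positivity)).2 ?_)
  push_cast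
  linarith

lemma factorialSeries_mem_Ico (s : Set ℕ) : factorialSeries s ∈ Ico (0 : ℝ) 1 := by
  have hle : factorialSeries s ≤ ∑' k, ((k + 3)! : ℝ)⁻¹ :=
    ((summable_inv_factorial_add 3).indicator s).tsum_le_tsum
      (Set.indicator_le_self' fun k _ => by positivity) (summable_inv_factorial_add 3)
  have h3 := tsum_inv_factorial_add_le (b := 3) (by omega)
  have h3' : (2 : ℝ) * ((3 ! : ℕ) : ℝ)⁻¹ < 1 := by norm_num [factorial]
  exact ⟨tsum_nonneg <| Set.indicator_nonneg fun k _ => by positivity, by linarith⟩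

lemma coe_factorial_mul_factorialSeries (s : Set ℕ) (n : ℕ) :
    (((n + 3)! * factorialSeries s : ℝ) : 𝕋)
      = (((n + 3)! * ∑' j, s.indicator (fun k => ((k + 3)! : ℝ)⁻¹) (j + (n + 1)) : ℝ) : 𝕋) := by
  have hhead : ((n + 3)! : ℝ) * ∑ k ∈ Finset.range (n + 1),
      s.indicator (fun k => ((k + 3)! : ℝ)⁻¹) k ∈ AddSubgroup.zmultiples (1 : ℝ) := by
    rw [Finset.mul_sum]
    refine AddSubgroup.sum_mem _ fun k hk => ?_
    by_cases hks : k ∈ s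
    · rw [Set.indicator_of_mem hks]
      exact factorial_mul_inv_factorial_mem_zmultiples (by simp at hk; omega)
    · rw [Set.indicator_of_notMem hks, mul_zero]
      exact zero_mem _
  rw [factorialSeries, ← ((summable_inv_factorial_add 3).indicator s).sum_add_tsum_nat_add (n + 1),
    mul_add, AddCircle.coe_add, coe_eq_zero_of_mem_zmultiples_one hhead, zero_add]

lemma circleChar_factorialSeries_mem (s : Set ℕ) :
    circleChar (factorialSeries s) ∈ characterizedSubgroup fun n => ((n + 3)! : ℤ) := by
  set ε : ℕ → ℝ := fun n =>
    (n + 3)! * ∑' j, s.indicator (fun k => ((k + 3)! : ℝ)⁻¹) (j + (n + 1))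
  have hε_nonneg (n : ℕ) : 0 ≤ ε n :=
    mul_nonneg (by positivity) <|
      tsum_nonneg fun _ => Set.indicator_nonneg (fun k _ => by positivity) _
  have hε_le (n : ℕ) : ε n ≤ 2 / ((n + 4 : ℕ) : ℝ) :=
    calc ε n ≤ (n + 3)! * (2 * ((n + 4)! : ℝ)⁻¹) := by
          refine mul_le_mul_of_nonneg_left ?_ (by positivity)
          exact (tsum_indicator_nat_add_le (fun k => by positivity) (summable_inv_factorial_add 3)
            s (n + 1)).trans (tsum_inv_factorial_tail_le n)
      _ = 2 / ((n + 4 : ℕ) : ℝ) := by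
          rw [two_mul_inv_factorial_add_four, mul_comm, mul_assoc, inv_mul_cancel₀ (by positivity),
            mul_one]
  have hε : Tendsto ε atTop (𝓝 0) := squeeze_zero hε_nonneg hε_le
    ((tendsto_const_div_atTop_nhds_zero_nat 2).comp (tendsto_add_atTop_nat 4))
  rw [mem_characterizedSubgroup]
  simp_rw [circleChar_apply, Int.cast_natCast, coe_factorial_mul_factorialSeries]
  exact ((AddCircle.continuous_mk' 1).tendsto 0).comp hε

lemma circleChar_inv_two_mul_apply_self_ne_zero {a : ℤ} (ha : a ≠ 0) :
    circleChar (2 * a : ℝ)⁻¹ a ≠ 0 := by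
  have : (a : ℝ) * (2 * (a : ℝ))⁻¹ = 1 / 2 := by field_simp
  rw [circleChar_apply, this, Ne, AddCircle.coe_eq_zero_iff_of_mem_Ico (by norm_num)]
  norm_num

lemma circleChar_inv_two_mul_mem {a : ℤ} (ha : a ≠ 0) :
    circleChar (2 * a : ℝ)⁻¹ ∈ characterizedSubgroup fun n => ((n + 3)! : ℤ) := by
  refine tendsto_const_nhds.congr' ?_
  filter_upwards [eventually_ge_atTop (2 * a).natAbs] with n hn
  obtain ⟨q, hq⟩ : 2 * a ∣ ((n + 3)! : ℤ) := Int.natAbs_dvd_natAbs.1 <| by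
    simpa using Nat.dvd_factorial (by omega) (by omega : (2 * a).natAbs ≤ n + 3)
  have : ((2 * a * q : ℤ) : ℝ) * (2 * (a : ℝ))⁻¹ = q := by push_cast; field_simp
  rw [circleChar_apply, hq, this]
  exact (coe_eq_zero_of_mem_zmultiples_one (AddSubgroup.intCast_mem_zmultiples_one q)).symm

theorem stmt17 :
    ∃ x : ℕ → ℤ, Function.Injective x ∧
    ∃ H : AddSubgroup (ℤ →+ 𝕋),
      (∀ a : ℤ, a ≠ 0 → ∃ h ∈ H, h a ≠ 0) ∧
      Cardinal.mk H = Cardinal.continuum ∧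
      (∀ h ∈ H, Tendsto (fun n => h (x n)) atTop (𝓝 (0 : 𝕋))) ∧
      Tendsto x atTop (@nhds ℤ (weakTopOf H) 0) := by
  set x : ℕ → ℤ := fun n => ((n + 3)! : ℤ)
  have hx : Function.Injective x := Nat.cast_injective.comp <| StrictMono.injective <|
    strictMono_nat_of_lt_succ fun n => (factorial_lt (by omega)).2 (by omega)
  have hcard : Cardinal.continuum ≤ Cardinal.mk (characterizedSubgroup x) := by
    rw [← Cardinal.mk_set_nat]
    refine Cardinal.mk_le_of_injective (f := fun s =>
      ⟨circleChar (factorialSeries s), circleChar_factorialSeries_mem s⟩) fun s t hst => ?_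
    exact factorialSeries_injective <| circleChar_injOn (factorialSeries_mem_Ico s)
      (factorialSeries_mem_Ico t) (congrArg Subtype.val hst)
  refine ⟨x, hx, characterizedSubgroup x,
    fun a ha => ⟨_, circleChar_inv_two_mul_mem ha, circleChar_inv_two_mul_apply_self_ne_zero ha⟩,
    le_antisymm ((Cardinal.mk_subtype_le _).trans mk_intHom_circle_le_continuum) hcard,
    fun h hh => hh, ?_⟩
  exact (tendsto_weakTopOf_iff _).2 fun h hh => by rw [map_zero]; exact hh
end
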